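/- arXiv:2409.04336 — 2 statements merged into one kernel-verified Lean document; each statement's English description precedes it below -/
import Mathlib

section
/- Let Q_τ be the quadratic Cremona map of ℂ³ given by Q_τ(x,y,z) = (τy²−xz, τx²−yz, z²−τ²xy). Then there exists a nonzero constant c ∈ ℂ such that for every t ∈ ℂ one has the equality of polynomial 1-forms Q_τ^*(Ω + t·Ξ) = c·((x+τy+τz)(x+y+τ²z)(x+τ²y+z))²·(Ω + (−t−τ)·Ξ). (Hence the strict transform of the Lins Neto foliation ℱ_t under Q_τ is ℱ_{−t−τ}.) -/
open MvPolynomial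

noncomputable section

/-- τ = e^{2πi/3}, a primitive cube root of unity. -/
def τ : ℂ := Complex.exp (2 * Real.pi * Complex.I / 3)

/-- The polynomial ring ℂ[x,y,z]. -/
abbrev R3 : Type := MvPolynomial (Fin 3) ℂ

def Xv : R3 := X 0
def Yv : R3 := X 1
def Zv : R3 := X 2

/-- The 1-form Ω (coefficients of dx, dy, dz). -/
def Om : Fin 3 → R3 :=
  ![Zv * (Yv - Zv) * (Zv ^ 2 + Yv ^ 2 + Yv * Zv) * Yv,
    -(Zv * (Xv - Zv) * (Xv ^ 2 + Zv * Xv + Zv ^ 2) * Xv),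
    Xv * Yv * (Xv - Yv) * (Xv ^ 2 + Xv * Yv + Yv ^ 2)]

/-- The 1-form Ξ (coefficients of dx, dy, dz). -/
def Xi : Fin 3 → R3 :=
  ![-((Yv - Zv) * (Zv ^ 2 + Yv ^ 2 + Yv * Zv) * Xv ^ 2),
    (Xv - Zv) * (Xv ^ 2 + Zv * Xv + Zv ^ 2) * Yv ^ 2,
    -(Zv ^ 2 * (Xv - Yv) * (Xv ^ 2 + Xv * Yv + Yv ^ 2))]

/-- Pullback of the 1-form ω by the polynomial map Q:
`Q^*ω := (A∘Q) dQ₁ + (B∘Q) dQ₂ + (C∘Q) dQ₃`. -/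
def pullback (Q ω : Fin 3 → R3) : Fin 3 → R3 :=
  fun i => ∑ j, aeval Q (ω j) * pderiv i (Q j)

def Qmap : Fin 3 → R3 := ![C τ * Yv ^ 2 - Xv * Zv, C τ * Xv ^ 2 - Yv * Zv, Zv ^ 2 - C τ ^ 2 * Xv * Yv]


private theorem hτ : τ^2 + τ + 1 = 0 := by
  have h3 : τ^3 = 1 := by
    have h : (3:ℂ) * (2 * Real.pi * Complex.I / 3) = 2 * Real.pi * Complex.I := by ring
    rw [τ, ← Complex.exp_nat_mul]
    push_cast
    rw [h, Complex.exp_two_pi_mul_I]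
  have h1 : τ ≠ 1 := by
    intro h
    rw [τ, Complex.exp_eq_one_iff] at h
    obtain ⟨n, hn⟩ := h
    have hne : (2 * (Real.pi:ℂ) * Complex.I) ≠ 0 := by
      simp [Real.pi_ne_zero, Complex.I_ne_zero]
    have h2 : ((3*n - 1 : ℤ) : ℂ) * (2 * (Real.pi:ℂ) * Complex.I) = 0 := by
      push_cast
      linear_combination -3 * hn
    have h4 : ((3*n - 1 : ℤ) : ℂ) = 0 := by
      rcases mul_eq_zero.mp h2 with h' | h'
      · exact h'
      · exact absurd h' hne
    have : (3*n - 1 : ℤ) = 0 := by exact_mod_cast h4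
    omega
  have h5 : (τ - 1) * (τ^2 + τ + 1) = 0 := by linear_combination h3
  rcases mul_eq_zero.mp h5 with h | h
  · exact absurd (sub_eq_zero.mp h) h1
  · exact h

set_option maxHeartbeats 100000000 in
private theorem comp0 (t : ℂ) :
    pullback Qmap (fun i => Om i + C t * Xi i) 0 =
      C (1:ℂ) * ((Xv + C τ * Yv + C τ * Zv) * (Xv + Yv + C τ ^ 2 * Zv) * (Xv + C τ ^ 2 * Yv + Zv)) ^ 2 * (Om 0 + C (-t - τ) * Xi 0) := by
  have hu : (C τ : R3)^2 + C τ + 1 = 0 := by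
    rw [← C_1, ← C_pow, ← C_add, ← C_add, hτ, C_0]
  simp only [pullback, Fin.sum_univ_three, Qmap, Om, Xi, Xv, Yv, Zv,
    Matrix.cons_val_zero, Matrix.cons_val_one, Matrix.head_cons, Matrix.cons_val_two,
    Matrix.tail_cons, map_add, map_sub, map_mul, map_pow, map_neg, map_one,
    aeval_X, aeval_C, algebraMap_eq, pderiv_X, pderiv_C, C_neg, C_sub, C_add,
    Pi.single_apply, Fin.isValue, mul_one, mul_zero, zero_mul, one_mul,
    add_zero, zero_add, sub_zero, Derivation.leibniz, Derivation.leibniz_pow,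
    smul_eq_mul]
  have e1 : ((2:Fin 3) = 0) = False := by decide
  have e2 : ((1:Fin 3) = 0) = False := by decide
  have e3 : ((0:Fin 3) = 1) = False := by decide
  have e4 : ((2:Fin 3) = 1) = False := by decide
  have e5 : ((0:Fin 3) = 2) = False := by decide
  have e6 : ((1:Fin 3) = 2) = False := by decide
  norm_num [e1,e2,e3,e4,e5,e6]
  linear_combination ((((-1:R3)*X 1*X 2^10 + X 1*X 2^10*C τ + (-1:R3)*X 1*X 2^10*C τ^3 + X 1*X 2^10*C τ^4 + (2:R3)*X 1^2*X 2^9*C τ^4 + (-2:R3)*X 1^2*X 2^9*C τ^5 + (2:R3)*X 1^2*X 2^9*C τ^6 + X 1^3*X 2^8*C τ^2) : R3) +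
      (((-1:R3)*X 1^3*X 2^8*C τ^3 + (4:R3)*X 1^3*X 2^8*C τ^4 + (-3:R3)*X 1^3*X 2^8*C τ^5 + (4:R3)*X 1^3*X 2^8*C τ^6 + (-1:R3)*X 1^3*X 2^8*C τ^7 + X 1^3*X 2^8*C τ^8 + (-1:R3)*X 1^4*X 2^7 + X 1^4*X 2^7*C τ) : R3) +
      (((2:R3)*X 1^4*X 2^7*C τ^2 + (-3:R3)*X 1^4*X 2^7*C τ^3 + (5:R3)*X 1^4*X 2^7*C τ^4 + (-2:R3)*X 1^4*X 2^7*C τ^5 + (4:R3)*X 1^4*X 2^7*C τ^6 + (-2:R3)*X 1^4*X 2^7*C τ^7 + (2:R3)*X 1^4*X 2^7*C τ^8 + X 1^5*X 2^6*C τ^2) : R3) +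
      (((-1:R3)*X 1^5*X 2^6*C τ^3 + (2:R3)*X 1^5*X 2^6*C τ^4 + (-1:R3)*X 1^5*X 2^6*C τ^5 + (2:R3)*X 1^5*X 2^6*C τ^6 + (-1:R3)*X 1^5*X 2^6*C τ^7 + X 1^5*X 2^6*C τ^8 + (-1:R3)*X 1^6*X 2^5*C τ^2 + X 1^6*X 2^5*C τ^3) : R3) +
      (((-2:R3)*X 1^6*X 2^5*C τ^4 + X 1^6*X 2^5*C τ^5 + (-2:R3)*X 1^6*X 2^5*C τ^6 + X 1^6*X 2^5*C τ^7 + (-1:R3)*X 1^6*X 2^5*C τ^8 + (-2:R3)*X 1^7*X 2^4*C τ^2 + (3:R3)*X 1^7*X 2^4*C τ^3 + (-5:R3)*X 1^7*X 2^4*C τ^4) : R3) +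
      (((2:R3)*X 1^7*X 2^4*C τ^5 + (-4:R3)*X 1^7*X 2^4*C τ^6 + (2:R3)*X 1^7*X 2^4*C τ^7 + (-2:R3)*X 1^7*X 2^4*C τ^8 + (-1:R3)*X 1^7*X 2^4*C t*C τ^2 + X 1^7*X 2^4*C t*C τ^3 + (-1:R3)*X 1^8*X 2^3*C τ^2 + X 1^8*X 2^3*C τ^3) : R3) +
      (((-4:R3)*X 1^8*X 2^3*C τ^4 + (3:R3)*X 1^8*X 2^3*C τ^5 + (-4:R3)*X 1^8*X 2^3*C τ^6 + X 1^8*X 2^3*C τ^7 + (-1:R3)*X 1^8*X 2^3*C τ^8 + (-2:R3)*X 1^9*X 2^2*C τ^4 + (2:R3)*X 1^9*X 2^2*C τ^5 + (-2:R3)*X 1^9*X 2^2*C τ^6) : R3) +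
      (((2:R3)*X 0*X 1*X 2^9*C τ^4 + (8:R3)*X 0*X 1^2*X 2^8*C τ^2 + (-4:R3)*X 0*X 1^2*X 2^8*C τ^3 + (4:R3)*X 0*X 1^2*X 2^8*C τ^4 + (2:R3)*X 0*X 1^2*X 2^8*C τ^5 + (2:R3)*X 0*X 1^2*X 2^8*C τ^6 + (2:R3)*X 0*X 1^3*X 2^7*C τ + (4:R3)*X 0*X 1^3*X 2^7*C τ^2) : R3) +
      (((-2:R3)*X 0*X 1^3*X 2^7*C τ^3 + (12:R3)*X 0*X 1^3*X 2^7*C τ^4 + (-2:R3)*X 0*X 1^3*X 2^7*C τ^5 + (4:R3)*X 0*X 1^3*X 2^7*C τ^6 + (2:R3)*X 0*X 1^3*X 2^7*C τ^7 + (2:R3)*X 0*X 1^4*X 2^6*C τ + (4:R3)*X 0*X 1^4*X 2^6*C τ^2 + (-2:R3)*X 0*X 1^4*X 2^6*C τ^3) : R3) +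
      (((10:R3)*X 0*X 1^4*X 2^6*C τ^4 + (-2:R3)*X 0*X 1^4*X 2^6*C τ^5 + (4:R3)*X 0*X 1^4*X 2^6*C τ^6 + (2:R3)*X 0*X 1^4*X 2^6*C τ^7 + (2:R3)*X 0*X 1^5*X 2^5*C t*C τ + (-2:R3)*X 0*X 1^5*X 2^5*C t*C τ^2 + (-2:R3)*X 0*X 1^6*X 2^4*C τ + (-4:R3)*X 0*X 1^6*X 2^4*C τ^2) : R3) +
      (((2:R3)*X 0*X 1^6*X 2^4*C τ^3 + (-10:R3)*X 0*X 1^6*X 2^4*C τ^4 + (2:R3)*X 0*X 1^6*X 2^4*C τ^5 + (-4:R3)*X 0*X 1^6*X 2^4*C τ^6 + (-2:R3)*X 0*X 1^6*X 2^4*C τ^7 + (-2:R3)*X 0*X 1^7*X 2^3*C τ + (-4:R3)*X 0*X 1^7*X 2^3*C τ^2 + (2:R3)*X 0*X 1^7*X 2^3*C τ^3) : R3) +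
      (((-12:R3)*X 0*X 1^7*X 2^3*C τ^4 + (2:R3)*X 0*X 1^7*X 2^3*C τ^5 + (-4:R3)*X 0*X 1^7*X 2^3*C τ^6 + (-2:R3)*X 0*X 1^7*X 2^3*C τ^7 + (-2:R3)*X 0*X 1^8*X 2^2*C τ^2 + (-2:R3)*X 0*X 1^8*X 2^2*C τ^3 + (-4:R3)*X 0*X 1^8*X 2^2*C τ^4 + (-2:R3)*X 0*X 1^8*X 2^2*C τ^5) : R3) +
      (((-2:R3)*X 0*X 1^8*X 2^2*C τ^6 + (2:R3)*X 0*X 1^8*X 2^2*C t*C τ^4 + (-2:R3)*X 0*X 1^8*X 2^2*C t*C τ^5 + (-2:R3)*X 0*X 1^9*X 2*C τ^4 + (-1:R3)*X 0^2*X 2^9*C τ + X 0^2*X 2^9*C τ^2 + (-1:R3)*X 0^2*X 2^9*C τ^4 + X 0^2*X 2^9*C τ^5) : R3) +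
      (((-1:R3)*X 0^2*X 2^9*C t + X 0^2*X 2^9*C t*C τ + (-1:R3)*X 0^2*X 2^9*C t*C τ^3 + X 0^2*X 2^9*C t*C τ^4 + X 0^2*X 1*X 2^8*C τ^2 + (3:R3)*X 0^2*X 1*X 2^8*C τ^3 + X 0^2*X 1*X 2^8*C τ^4 + (2:R3)*X 0^2*X 1*X 2^8*C τ^5) : R3) +
      (((-2:R3)*X 0^2*X 1*X 2^8*C τ^6 + (2:R3)*X 0^2*X 1*X 2^8*C τ^7 + (2:R3)*X 0^2*X 1*X 2^8*C t*C τ^4 + (-2:R3)*X 0^2*X 1*X 2^8*C t*C τ^5 + (2:R3)*X 0^2*X 1*X 2^8*C t*C τ^6 + (4:R3)*X 0^2*X 1^2*X 2^7*C τ + (4:R3)*X 0^2*X 1^2*X 2^7*C τ^2 + (5:R3)*X 0^2*X 1^2*X 2^7*C τ^3) : R3) +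
      (((3:R3)*X 0^2*X 1^2*X 2^7*C τ^4 + (8:R3)*X 0^2*X 1^2*X 2^7*C τ^5 + (-3:R3)*X 0^2*X 1^2*X 2^7*C τ^6 + (4:R3)*X 0^2*X 1^2*X 2^7*C τ^7 + (-1:R3)*X 0^2*X 1^2*X 2^7*C τ^8 + X 0^2*X 1^2*X 2^7*C τ^9 + X 0^2*X 1^2*X 2^7*C t*C τ^2 + (-1:R3)*X 0^2*X 1^2*X 2^7*C t*C τ^3) : R3) +
      (((4:R3)*X 0^2*X 1^2*X 2^7*C t*C τ^4 + (-3:R3)*X 0^2*X 1^2*X 2^7*C t*C τ^5 + (4:R3)*X 0^2*X 1^2*X 2^7*C t*C τ^6 + (-1:R3)*X 0^2*X 1^2*X 2^7*C t*C τ^7 + X 0^2*X 1^2*X 2^7*C t*C τ^8 + X 0^2*X 1^3*X 2^6 + (11:R3)*X 0^2*X 1^3*X 2^6*C τ + (-2:R3)*X 0^2*X 1^3*X 2^6*C τ^2) : R3) +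
      (((9:R3)*X 0^2*X 1^3*X 2^6*C τ^3 + (-1:R3)*X 0^2*X 1^3*X 2^6*C τ^4 + (12:R3)*X 0^2*X 1^3*X 2^6*C τ^5 + (-1:R3)*X 0^2*X 1^3*X 2^6*C τ^6 + (4:R3)*X 0^2*X 1^3*X 2^6*C τ^7 + (-2:R3)*X 0^2*X 1^3*X 2^6*C τ^8 + (2:R3)*X 0^2*X 1^3*X 2^6*C τ^9 + (-1:R3)*X 0^2*X 1^3*X 2^6*C t) : R3) +
      ((X 0^2*X 1^3*X 2^6*C t*C τ + (2:R3)*X 0^2*X 1^3*X 2^6*C t*C τ^2 + (-3:R3)*X 0^2*X 1^3*X 2^6*C t*C τ^3 + (5:R3)*X 0^2*X 1^3*X 2^6*C t*C τ^4 + (-2:R3)*X 0^2*X 1^3*X 2^6*C t*C τ^5 + (4:R3)*X 0^2*X 1^3*X 2^6*C t*C τ^6 + (-2:R3)*X 0^2*X 1^3*X 2^6*C t*C τ^7 + (2:R3)*X 0^2*X 1^3*X 2^6*C t*C τ^8) : R3) +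
      (((4:R3)*X 0^2*X 1^4*X 2^5*C τ + (3:R3)*X 0^2*X 1^4*X 2^5*C τ^2 + (2:R3)*X 0^2*X 1^4*X 2^5*C τ^3 + (2:R3)*X 0^2*X 1^4*X 2^5*C τ^4 + (6:R3)*X 0^2*X 1^4*X 2^5*C τ^5 + (-1:R3)*X 0^2*X 1^4*X 2^5*C τ^6 + (2:R3)*X 0^2*X 1^4*X 2^5*C τ^7 + (-1:R3)*X 0^2*X 1^4*X 2^5*C τ^8) : R3) +
      ((X 0^2*X 1^4*X 2^5*C τ^9 + X 0^2*X 1^4*X 2^5*C t*C τ^2 + (-1:R3)*X 0^2*X 1^4*X 2^5*C t*C τ^3 + (2:R3)*X 0^2*X 1^4*X 2^5*C t*C τ^4 + (-1:R3)*X 0^2*X 1^4*X 2^5*C t*C τ^5 + (2:R3)*X 0^2*X 1^4*X 2^5*C t*C τ^6 + (-1:R3)*X 0^2*X 1^4*X 2^5*C t*C τ^7 + X 0^2*X 1^4*X 2^5*C t*C τ^8) : R3) +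
      (((-4:R3)*X 0^2*X 1^5*X 2^4*C τ + (-3:R3)*X 0^2*X 1^5*X 2^4*C τ^2 + (-2:R3)*X 0^2*X 1^5*X 2^4*C τ^3 + (-2:R3)*X 0^2*X 1^5*X 2^4*C τ^4 + (-6:R3)*X 0^2*X 1^5*X 2^4*C τ^5 + X 0^2*X 1^5*X 2^4*C τ^6 + (-2:R3)*X 0^2*X 1^5*X 2^4*C τ^7 + X 0^2*X 1^5*X 2^4*C τ^8) : R3) +
      (((-1:R3)*X 0^2*X 1^5*X 2^4*C τ^9 + (-1:R3)*X 0^2*X 1^5*X 2^4*C t*C τ^2 + X 0^2*X 1^5*X 2^4*C t*C τ^3 + (-2:R3)*X 0^2*X 1^5*X 2^4*C t*C τ^4 + X 0^2*X 1^5*X 2^4*C t*C τ^5 + (-2:R3)*X 0^2*X 1^5*X 2^4*C t*C τ^6 + X 0^2*X 1^5*X 2^4*C t*C τ^7 + (-1:R3)*X 0^2*X 1^5*X 2^4*C t*C τ^8) : R3) +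
      (((-1:R3)*X 0^2*X 1^6*X 2^3 + (-7:R3)*X 0^2*X 1^6*X 2^3*C τ + (-2:R3)*X 0^2*X 1^6*X 2^3*C τ^2 + (-9:R3)*X 0^2*X 1^6*X 2^3*C τ^3 + X 0^2*X 1^6*X 2^3*C τ^4 + (-12:R3)*X 0^2*X 1^6*X 2^3*C τ^5 + X 0^2*X 1^6*X 2^3*C τ^6 + (-4:R3)*X 0^2*X 1^6*X 2^3*C τ^7) : R3) +
      (((2:R3)*X 0^2*X 1^6*X 2^3*C τ^8 + (-2:R3)*X 0^2*X 1^6*X 2^3*C τ^9 + (-2:R3)*X 0^2*X 1^6*X 2^3*C t*C τ^2 + (-1:R3)*X 0^2*X 1^6*X 2^3*C t*C τ^3 + (-1:R3)*X 0^2*X 1^6*X 2^3*C t*C τ^4 + (2:R3)*X 0^2*X 1^6*X 2^3*C t*C τ^5 + (-4:R3)*X 0^2*X 1^6*X 2^3*C t*C τ^6 + (2:R3)*X 0^2*X 1^6*X 2^3*C t*C τ^7) : R3) +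
      (((-2:R3)*X 0^2*X 1^6*X 2^3*C t*C τ^8 + (-4:R3)*X 0^2*X 1^7*X 2^2*C τ + (-4:R3)*X 0^2*X 1^7*X 2^2*C τ^2 + (-5:R3)*X 0^2*X 1^7*X 2^2*C τ^3 + (-3:R3)*X 0^2*X 1^7*X 2^2*C τ^4 + (-8:R3)*X 0^2*X 1^7*X 2^2*C τ^5 + (3:R3)*X 0^2*X 1^7*X 2^2*C τ^6 + (-4:R3)*X 0^2*X 1^7*X 2^2*C τ^7) : R3) +
      ((X 0^2*X 1^7*X 2^2*C τ^8 + (-1:R3)*X 0^2*X 1^7*X 2^2*C τ^9 + (-1:R3)*X 0^2*X 1^7*X 2^2*C t*C τ^2 + X 0^2*X 1^7*X 2^2*C t*C τ^3 + (-4:R3)*X 0^2*X 1^7*X 2^2*C t*C τ^4 + (3:R3)*X 0^2*X 1^7*X 2^2*C t*C τ^5 + (-4:R3)*X 0^2*X 1^7*X 2^2*C t*C τ^6 + X 0^2*X 1^7*X 2^2*C t*C τ^7) : R3) +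
      (((-1:R3)*X 0^2*X 1^7*X 2^2*C t*C τ^8 + (-1:R3)*X 0^2*X 1^8*X 2*C τ^2 + (-3:R3)*X 0^2*X 1^8*X 2*C τ^3 + (-1:R3)*X 0^2*X 1^8*X 2*C τ^4 + (-2:R3)*X 0^2*X 1^8*X 2*C τ^5 + (2:R3)*X 0^2*X 1^8*X 2*C τ^6 + (-2:R3)*X 0^2*X 1^8*X 2*C τ^7 + (-2:R3)*X 0^2*X 1^8*X 2*C t*C τ^4) : R3) +
      (((2:R3)*X 0^2*X 1^8*X 2*C t*C τ^5 + (-2:R3)*X 0^2*X 1^8*X 2*C t*C τ^6 + (-1:R3)*X 0^2*X 1^9*C t*C τ^6 + X 0^2*X 1^9*C t*C τ^7 + (2:R3)*X 0^3*X 2^8*C τ^5 + (2:R3)*X 0^3*X 2^8*C t*C τ^4 + (2:R3)*X 0^3*X 1*X 2^7*C τ + (2:R3)*X 0^3*X 1*X 2^7*C τ^2) : R3) +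
      (((10:R3)*X 0^3*X 1*X 2^7*C τ^3 + (-4:R3)*X 0^3*X 1*X 2^7*C τ^4 + (4:R3)*X 0^3*X 1*X 2^7*C τ^5 + (2:R3)*X 0^3*X 1*X 2^7*C τ^6 + (2:R3)*X 0^3*X 1*X 2^7*C τ^7 + (8:R3)*X 0^3*X 1*X 2^7*C t*C τ^2 + (-4:R3)*X 0^3*X 1*X 2^7*C t*C τ^3 + (4:R3)*X 0^3*X 1*X 2^7*C t*C τ^4) : R3) +
      (((2:R3)*X 0^3*X 1*X 2^7*C t*C τ^5 + (2:R3)*X 0^3*X 1*X 2^7*C t*C τ^6 + (2:R3)*X 0^3*X 1^2*X 2^6 + (8:R3)*X 0^3*X 1^2*X 2^6*C τ + (2:R3)*X 0^3*X 1^2*X 2^6*C τ^2 + (12:R3)*X 0^3*X 1^2*X 2^6*C τ^3 + (12:R3)*X 0^3*X 1^2*X 2^6*C τ^5 + (-2:R3)*X 0^3*X 1^2*X 2^6*C τ^6) : R3) +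
      (((4:R3)*X 0^3*X 1^2*X 2^6*C τ^7 + (2:R3)*X 0^3*X 1^2*X 2^6*C τ^8 + (2:R3)*X 0^3*X 1^2*X 2^6*C t*C τ + (4:R3)*X 0^3*X 1^2*X 2^6*C t*C τ^2 + (-2:R3)*X 0^3*X 1^2*X 2^6*C t*C τ^3 + (12:R3)*X 0^3*X 1^2*X 2^6*C t*C τ^4 + (-2:R3)*X 0^3*X 1^2*X 2^6*C t*C τ^5 + (4:R3)*X 0^3*X 1^2*X 2^6*C t*C τ^6) : R3) +
      (((2:R3)*X 0^3*X 1^2*X 2^6*C t*C τ^7 + (2:R3)*X 0^3*X 1^3*X 2^5 + (8:R3)*X 0^3*X 1^3*X 2^5*C τ + (2:R3)*X 0^3*X 1^3*X 2^5*C τ^2 + (12:R3)*X 0^3*X 1^3*X 2^5*C τ^3 + (10:R3)*X 0^3*X 1^3*X 2^5*C τ^5 + (-2:R3)*X 0^3*X 1^3*X 2^5*C τ^6 + (4:R3)*X 0^3*X 1^3*X 2^5*C τ^7) : R3) +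
      (((2:R3)*X 0^3*X 1^3*X 2^5*C τ^8 + (2:R3)*X 0^3*X 1^3*X 2^5*C t*C τ + (4:R3)*X 0^3*X 1^3*X 2^5*C t*C τ^2 + (-2:R3)*X 0^3*X 1^3*X 2^5*C t*C τ^3 + (10:R3)*X 0^3*X 1^3*X 2^5*C t*C τ^4 + (-2:R3)*X 0^3*X 1^3*X 2^5*C t*C τ^5 + (4:R3)*X 0^3*X 1^3*X 2^5*C t*C τ^6 + (2:R3)*X 0^3*X 1^3*X 2^5*C t*C τ^7) : R3) +
      (((-16:R3)*X 0^3*X 1^4*X 2^4*C τ^3 + (16:R3)*X 0^3*X 1^4*X 2^4*C τ^4 + (-2:R3)*X 0^3*X 1^5*X 2^3 + (-8:R3)*X 0^3*X 1^5*X 2^3*C τ + (-2:R3)*X 0^3*X 1^5*X 2^3*C τ^2 + (-12:R3)*X 0^3*X 1^5*X 2^3*C τ^3 + (-10:R3)*X 0^3*X 1^5*X 2^3*C τ^5 + (2:R3)*X 0^3*X 1^5*X 2^3*C τ^6) : R3) +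
      (((-4:R3)*X 0^3*X 1^5*X 2^3*C τ^7 + (-2:R3)*X 0^3*X 1^5*X 2^3*C τ^8 + (-2:R3)*X 0^3*X 1^5*X 2^3*C t*C τ + (-4:R3)*X 0^3*X 1^5*X 2^3*C t*C τ^2 + (2:R3)*X 0^3*X 1^5*X 2^3*C t*C τ^3 + (-10:R3)*X 0^3*X 1^5*X 2^3*C t*C τ^4 + (2:R3)*X 0^3*X 1^5*X 2^3*C t*C τ^5 + (-4:R3)*X 0^3*X 1^5*X 2^3*C t*C τ^6) : R3) +
      (((-2:R3)*X 0^3*X 1^5*X 2^3*C t*C τ^7 + (-2:R3)*X 0^3*X 1^6*X 2^2 + (-8:R3)*X 0^3*X 1^6*X 2^2*C τ + (-2:R3)*X 0^3*X 1^6*X 2^2*C τ^2 + (-12:R3)*X 0^3*X 1^6*X 2^2*C τ^3 + (-12:R3)*X 0^3*X 1^6*X 2^2*C τ^5 + (2:R3)*X 0^3*X 1^6*X 2^2*C τ^6 + (-4:R3)*X 0^3*X 1^6*X 2^2*C τ^7) : R3) +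
      (((-2:R3)*X 0^3*X 1^6*X 2^2*C τ^8 + (-2:R3)*X 0^3*X 1^6*X 2^2*C t*C τ + (-4:R3)*X 0^3*X 1^6*X 2^2*C t*C τ^2 + (2:R3)*X 0^3*X 1^6*X 2^2*C t*C τ^3 + (-12:R3)*X 0^3*X 1^6*X 2^2*C t*C τ^4 + (2:R3)*X 0^3*X 1^6*X 2^2*C t*C τ^5 + (-4:R3)*X 0^3*X 1^6*X 2^2*C t*C τ^6 + (-2:R3)*X 0^3*X 1^6*X 2^2*C t*C τ^7) : R3) +
      (((-2:R3)*X 0^3*X 1^7*X 2*C τ + (-2:R3)*X 0^3*X 1^7*X 2*C τ^2 + (-6:R3)*X 0^3*X 1^7*X 2*C τ^3 + (-4:R3)*X 0^3*X 1^7*X 2*C τ^5 + (-2:R3)*X 0^3*X 1^7*X 2*C τ^6 + (-2:R3)*X 0^3*X 1^7*X 2*C τ^7 + (-2:R3)*X 0^3*X 1^7*X 2*C t*C τ^2 + (-2:R3)*X 0^3*X 1^7*X 2*C t*C τ^3) : R3) +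
      (((-4:R3)*X 0^3*X 1^7*X 2*C t*C τ^4 + (-4:R3)*X 0^3*X 1^7*X 2*C t*C τ^6 + (-2:R3)*X 0^3*X 1^8*C τ^5 + (-2:R3)*X 0^3*X 1^8*C t*C τ^4 + X 0^4*X 2^7*C τ^3 + (3:R3)*X 0^4*X 2^7*C τ^4 + X 0^4*X 2^7*C τ^5 + X 0^4*X 2^7*C t*C τ^2) : R3) +
      (((3:R3)*X 0^4*X 2^7*C t*C τ^3 + X 0^4*X 2^7*C t*C τ^4 + X 0^4*X 1*X 2^6 + (3:R3)*X 0^4*X 1*X 2^6*C τ + (5:R3)*X 0^4*X 1*X 2^6*C τ^2 + (4:R3)*X 0^4*X 1*X 2^6*C τ^3 + (4:R3)*X 0^4*X 1*X 2^6*C τ^4 + (4:R3)*X 0^4*X 1*X 2^6*C τ^5) : R3) +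
      (((4:R3)*X 0^4*X 1*X 2^6*C τ^6 + (4:R3)*X 0^4*X 1*X 2^6*C t*C τ + (4:R3)*X 0^4*X 1*X 2^6*C t*C τ^2 + (4:R3)*X 0^4*X 1*X 2^6*C t*C τ^3 + (4:R3)*X 0^4*X 1*X 2^6*C t*C τ^4 + (4:R3)*X 0^4*X 1*X 2^6*C t*C τ^5 + (4:R3)*X 0^4*X 1^2*X 2^5 + (5:R3)*X 0^4*X 1^2*X 2^5*C τ) : R3) +
      (((8:R3)*X 0^4*X 1^2*X 2^5*C τ^2 + (5:R3)*X 0^4*X 1^2*X 2^5*C τ^3 + (7:R3)*X 0^4*X 1^2*X 2^5*C τ^4 + (2:R3)*X 0^4*X 1^2*X 2^5*C τ^5 + (7:R3)*X 0^4*X 1^2*X 2^5*C τ^6 + X 0^4*X 1^2*X 2^5*C τ^7 + X 0^4*X 1^2*X 2^5*C t + (8:R3)*X 0^4*X 1^2*X 2^5*C t*C τ) : R3) +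
      ((X 0^4*X 1^2*X 2^5*C t*C τ^2 + (7:R3)*X 0^4*X 1^2*X 2^5*C t*C τ^3 + (2:R3)*X 0^4*X 1^2*X 2^5*C t*C τ^4 + (7:R3)*X 0^4*X 1^2*X 2^5*C t*C τ^5 + X 0^4*X 1^2*X 2^5*C t*C τ^6 + X 0^4*X 1^3*X 2^4 + (3:R3)*X 0^4*X 1^3*X 2^4*C τ + (5:R3)*X 0^4*X 1^3*X 2^4*C τ^2) : R3) +
      (((3:R3)*X 0^4*X 1^3*X 2^4*C τ^3 + X 0^4*X 1^3*X 2^4*C τ^4 + (3:R3)*X 0^4*X 1^3*X 2^4*C τ^5 + (4:R3)*X 0^4*X 1^3*X 2^4*C τ^6 + (4:R3)*X 0^4*X 1^3*X 2^4*C t*C τ + (3:R3)*X 0^4*X 1^3*X 2^4*C t*C τ^2 + X 0^4*X 1^3*X 2^4*C t*C τ^3 + (3:R3)*X 0^4*X 1^3*X 2^4*C t*C τ^4) : R3) +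
      (((4:R3)*X 0^4*X 1^3*X 2^4*C t*C τ^5 + (-1:R3)*X 0^4*X 1^4*X 2^3 + (-3:R3)*X 0^4*X 1^4*X 2^3*C τ + (-5:R3)*X 0^4*X 1^4*X 2^3*C τ^2 + (-3:R3)*X 0^4*X 1^4*X 2^3*C τ^3 + (-1:R3)*X 0^4*X 1^4*X 2^3*C τ^4 + (-3:R3)*X 0^4*X 1^4*X 2^3*C τ^5 + (-4:R3)*X 0^4*X 1^4*X 2^3*C τ^6) : R3) +
      (((-4:R3)*X 0^4*X 1^4*X 2^3*C t*C τ + (-3:R3)*X 0^4*X 1^4*X 2^3*C t*C τ^2 + (-1:R3)*X 0^4*X 1^4*X 2^3*C t*C τ^3 + (-3:R3)*X 0^4*X 1^4*X 2^3*C t*C τ^4 + (-4:R3)*X 0^4*X 1^4*X 2^3*C t*C τ^5 + (-4:R3)*X 0^4*X 1^5*X 2^2 + (-5:R3)*X 0^4*X 1^5*X 2^2*C τ + (-5:R3)*X 0^4*X 1^5*X 2^2*C τ^2) : R3) +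
      (((-8:R3)*X 0^4*X 1^5*X 2^2*C τ^3 + (-7:R3)*X 0^4*X 1^5*X 2^2*C τ^4 + (7:R3)*X 0^4*X 1^5*X 2^2*C τ^5 + (-16:R3)*X 0^4*X 1^5*X 2^2*C τ^6 + (-1:R3)*X 0^4*X 1^5*X 2^2*C τ^7 + (-1:R3)*X 0^4*X 1^5*X 2^2*C t + (-7:R3)*X 0^4*X 1^5*X 2^2*C t*C τ + (-2:R3)*X 0^4*X 1^5*X 2^2*C t*C τ^2) : R3) +
      (((-7:R3)*X 0^4*X 1^5*X 2^2*C t*C τ^3 + (-2:R3)*X 0^4*X 1^5*X 2^2*C t*C τ^4 + (-7:R3)*X 0^4*X 1^5*X 2^2*C t*C τ^5 + (-1:R3)*X 0^4*X 1^5*X 2^2*C t*C τ^6 + (-1:R3)*X 0^4*X 1^6*X 2 + (-3:R3)*X 0^4*X 1^6*X 2*C τ + (-5:R3)*X 0^4*X 1^6*X 2*C τ^2 + (-4:R3)*X 0^4*X 1^6*X 2*C τ^3) : R3) +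
      (((-4:R3)*X 0^4*X 1^6*X 2*C τ^4 + (-4:R3)*X 0^4*X 1^6*X 2*C τ^5 + (-4:R3)*X 0^4*X 1^6*X 2*C τ^6 + (-4:R3)*X 0^4*X 1^6*X 2*C t*C τ + (-4:R3)*X 0^4*X 1^6*X 2*C t*C τ^2 + (-4:R3)*X 0^4*X 1^6*X 2*C t*C τ^3 + (-4:R3)*X 0^4*X 1^6*X 2*C t*C τ^4 + (-4:R3)*X 0^4*X 1^6*X 2*C t*C τ^5) : R3) +
      (((-1:R3)*X 0^4*X 1^7*C τ^3 + (-3:R3)*X 0^4*X 1^7*C τ^4 + (-1:R3)*X 0^4*X 1^7*C τ^5 + (-1:R3)*X 0^4*X 1^7*C t*C τ^2 + (-3:R3)*X 0^4*X 1^7*C t*C τ^3 + (-1:R3)*X 0^4*X 1^7*C t*C τ^4 + (-2:R3)*X 0^5*X 2^6*C τ + (4:R3)*X 0^5*X 2^6*C τ^2) : R3) +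
      (((2:R3)*X 0^5*X 2^6*C τ^3 + (2:R3)*X 0^5*X 2^6*C τ^4 + (2:R3)*X 0^5*X 2^6*C t*C τ + (2:R3)*X 0^5*X 2^6*C t*C τ^2 + (2:R3)*X 0^5*X 2^6*C t*C τ^3 + (2:R3)*X 0^5*X 1*X 2^5 + (2:R3)*X 0^5*X 1*X 2^5*C τ + (8:R3)*X 0^5*X 1*X 2^5*C τ^2) : R3) +
      (((8:R3)*X 0^5*X 1*X 2^5*C τ^4 + (2:R3)*X 0^5*X 1*X 2^5*C τ^5 + (2:R3)*X 0^5*X 1*X 2^5*C t + (8:R3)*X 0^5*X 1*X 2^5*C t*C τ + (8:R3)*X 0^5*X 1*X 2^5*C t*C τ^3 + (2:R3)*X 0^5*X 1*X 2^5*C t*C τ^4 + (2:R3)*X 0^5*X 1^2*X 2^4 + (2:R3)*X 0^5*X 1^2*X 2^4*C τ) : R3) +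
      (((8:R3)*X 0^5*X 1^2*X 2^4*C τ^2 + (8:R3)*X 0^5*X 1^2*X 2^4*C τ^4 + (2:R3)*X 0^5*X 1^2*X 2^4*C τ^5 + (2:R3)*X 0^5*X 1^2*X 2^4*C t + (8:R3)*X 0^5*X 1^2*X 2^4*C t*C τ + (8:R3)*X 0^5*X 1^2*X 2^4*C t*C τ^3 + (2:R3)*X 0^5*X 1^2*X 2^4*C t*C τ^4 + (-4:R3)*X 0^5*X 1^3*X 2^3*C τ^4) : R3) +
      (((4:R3)*X 0^5*X 1^3*X 2^3*C τ^5 + (-6:R3)*X 0^5*X 1^3*X 2^3*C t*C τ^3 + (6:R3)*X 0^5*X 1^3*X 2^3*C t*C τ^4 + (-2:R3)*X 0^5*X 1^4*X 2^2 + (-2:R3)*X 0^5*X 1^4*X 2^2*C τ + (-8:R3)*X 0^5*X 1^4*X 2^2*C τ^2 + (-8:R3)*X 0^5*X 1^4*X 2^2*C τ^4 + (-2:R3)*X 0^5*X 1^4*X 2^2*C τ^5) : R3) +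
      (((-2:R3)*X 0^5*X 1^4*X 2^2*C t + (-8:R3)*X 0^5*X 1^4*X 2^2*C t*C τ + (-8:R3)*X 0^5*X 1^4*X 2^2*C t*C τ^3 + (-2:R3)*X 0^5*X 1^4*X 2^2*C t*C τ^4 + (-2:R3)*X 0^5*X 1^5*X 2 + (-2:R3)*X 0^5*X 1^5*X 2*C τ + (-8:R3)*X 0^5*X 1^5*X 2*C τ^2 + (-8:R3)*X 0^5*X 1^5*X 2*C τ^4) : R3) +
      (((-2:R3)*X 0^5*X 1^5*X 2*C τ^5 + (-2:R3)*X 0^5*X 1^5*X 2*C t + (-8:R3)*X 0^5*X 1^5*X 2*C t*C τ + (-8:R3)*X 0^5*X 1^5*X 2*C t*C τ^3 + (-2:R3)*X 0^5*X 1^5*X 2*C t*C τ^4 + (-2:R3)*X 0^5*X 1^6*C τ^2 + (-2:R3)*X 0^5*X 1^6*C τ^3 + (-4:R3)*X 0^5*X 1^6*C τ^4) : R3) +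
      (((2:R3)*X 0^5*X 1^6*C τ^5 + (-2:R3)*X 0^5*X 1^6*C τ^7 + (2:R3)*X 0^5*X 1^6*C τ^8 + (-2:R3)*X 0^5*X 1^6*C t*C τ + (-2:R3)*X 0^5*X 1^6*C t*C τ^2 + (-4:R3)*X 0^5*X 1^6*C t*C τ^3 + (2:R3)*X 0^5*X 1^6*C t*C τ^4 + X 0^6*X 2^5*C τ) : R3) +
      (((3:R3)*X 0^6*X 2^5*C τ^2 + X 0^6*X 2^5*C τ^3 + X 0^6*X 2^5*C t + (3:R3)*X 0^6*X 2^5*C t*C τ + X 0^6*X 2^5*C t*C τ^2 + X 0^6*X 1*X 2^4 + (3:R3)*X 0^6*X 1*X 2^4*C τ + (4:R3)*X 0^6*X 1*X 2^4*C τ^2) : R3) +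
      (((4:R3)*X 0^6*X 1*X 2^4*C τ^3 + (4:R3)*X 0^6*X 1*X 2^4*C t + (4:R3)*X 0^6*X 1*X 2^4*C t*C τ + (-1:R3)*X 0^6*X 1*X 2^4*C t*C τ^2 + (5:R3)*X 0^6*X 1*X 2^4*C t*C τ^3 + X 0^6*X 1^2*X 2^3*C τ + (3:R3)*X 0^6*X 1^2*X 2^3*C τ^2 + X 0^6*X 1^2*X 2^3*C τ^3) : R3) +
      ((X 0^6*X 1^2*X 2^3*C t + (3:R3)*X 0^6*X 1^2*X 2^3*C t*C τ + X 0^6*X 1^2*X 2^3*C t*C τ^2 + (-1:R3)*X 0^6*X 1^3*X 2^2*C τ + (-3:R3)*X 0^6*X 1^3*X 2^2*C τ^2 + (-1:R3)*X 0^6*X 1^3*X 2^2*C τ^3 + (-1:R3)*X 0^6*X 1^3*X 2^2*C t + (-3:R3)*X 0^6*X 1^3*X 2^2*C t*C τ) : R3) +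
      (((-1:R3)*X 0^6*X 1^3*X 2^2*C t*C τ^2 + (-1:R3)*X 0^6*X 1^4*X 2 + (-3:R3)*X 0^6*X 1^4*X 2*C τ + (-4:R3)*X 0^6*X 1^4*X 2*C τ^2 + X 0^6*X 1^4*X 2*C τ^3 + (-5:R3)*X 0^6*X 1^4*X 2*C τ^4 + X 0^6*X 1^4*X 2*C τ^6 + (-1:R3)*X 0^6*X 1^4*X 2*C τ^7) : R3) +
      (((-4:R3)*X 0^6*X 1^4*X 2*C t + (-4:R3)*X 0^6*X 1^4*X 2*C t*C τ + (2:R3)*X 0^6*X 1^4*X 2*C t*C τ^2 + (-6:R3)*X 0^6*X 1^4*X 2*C t*C τ^3 + X 0^6*X 1^4*X 2*C t*C τ^5 + (-1:R3)*X 0^6*X 1^4*X 2*C t*C τ^6 + (-1:R3)*X 0^6*X 1^5*C τ + (-3:R3)*X 0^6*X 1^5*C τ^2) : R3) +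
      (((-1:R3)*X 0^6*X 1^5*C τ^3 + (-1:R3)*X 0^6*X 1^5*C t + (-3:R3)*X 0^6*X 1^5*C t*C τ + (-1:R3)*X 0^6*X 1^5*C t*C τ^2 + (2:R3)*X 0^7*X 2^4*C τ + (2:R3)*X 0^7*X 2^4*C t + (2:R3)*X 0^7*X 1*X 2^3*C τ + (2:R3)*X 0^7*X 1*X 2^3*C t) : R3) +
      (((4:R3)*X 0^7*X 1^2*X 2^2*C t*C τ^4 + (-4:R3)*X 0^7*X 1^2*X 2^2*C t*C τ^5 + (-2:R3)*X 0^7*X 1^3*X 2*C τ + (-2:R3)*X 0^7*X 1^3*X 2*C t + (-2:R3)*X 0^7*X 1^4*C τ + (-2:R3)*X 0^7*X 1^4*C t + X 0^8*X 2^3*C τ + (-1:R3)*X 0^8*X 2^3*C τ^2) : R3) +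
      ((X 0^8*X 2^3*C t + (-1:R3)*X 0^8*X 2^3*C t*C τ + (-1:R3)*X 0^8*X 1^3*C τ + X 0^8*X 1^3*C τ^2 + (-1:R3)*X 0^8*X 1^3*C τ^4 + X 0^8*X 1^3*C τ^5 + (-1:R3)*X 0^8*X 1^3*C t + X 0^8*X 1^3*C t*C τ) : R3) +
      (((-1:R3)*X 0^8*X 1^3*C t*C τ^3 + X 0^8*X 1^3*C t*C τ^4 + (-1:R3)*X 0^8*X 1^3*C t*C τ^6 + X 0^8*X 1^3*C t*C τ^7) : R3)) * hu

set_option maxHeartbeats 100000000 in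
private theorem comp1 (t : ℂ) :
    pullback Qmap (fun i => Om i + C t * Xi i) 1 =
      C (1:ℂ) * ((Xv + C τ * Yv + C τ * Zv) * (Xv + Yv + C τ ^ 2 * Zv) * (Xv + C τ ^ 2 * Yv + Zv)) ^ 2 * (Om 1 + C (-t - τ) * Xi 1) := by
  have hu : (C τ : R3)^2 + C τ + 1 = 0 := by
    rw [← C_1, ← C_pow, ← C_add, ← C_add, hτ, C_0]
  simp only [pullback, Fin.sum_univ_three, Qmap, Om, Xi, Xv, Yv, Zv,
    Matrix.cons_val_zero, Matrix.cons_val_one, Matrix.head_cons, Matrix.cons_val_two,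
    Matrix.tail_cons, map_add, map_sub, map_mul, map_pow, map_neg, map_one,
    aeval_X, aeval_C, algebraMap_eq, pderiv_X, pderiv_C, C_neg, C_sub, C_add,
    Pi.single_apply, Fin.isValue, mul_one, mul_zero, zero_mul, one_mul,
    add_zero, zero_add, sub_zero, Derivation.leibniz, Derivation.leibniz_pow,
    smul_eq_mul]
  have e1 : ((2:Fin 3) = 0) = False := by decide
  have e2 : ((1:Fin 3) = 0) = False := by decide
  have e3 : ((0:Fin 3) = 1) = False := by decide
  have e4 : ((2:Fin 3) = 1) = False := by decide
  have e5 : ((0:Fin 3) = 2) = False := by decide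
  have e6 : ((1:Fin 3) = 2) = False := by decide
  norm_num [e1,e2,e3,e4,e5,e6]
  linear_combination (((X 1^2*X 2^9*C τ + (-1:R3)*X 1^2*X 2^9*C τ^2 + X 1^2*X 2^9*C τ^4 + (-1:R3)*X 1^2*X 2^9*C τ^5 + X 1^2*X 2^9*C t + (-1:R3)*X 1^2*X 2^9*C t*C τ + X 1^2*X 2^9*C t*C τ^3 + (-1:R3)*X 1^2*X 2^9*C t*C τ^4) : R3) +
      (((-2:R3)*X 1^3*X 2^8*C τ^5 + (2:R3)*X 1^3*X 2^8*C τ^6 + (-2:R3)*X 1^3*X 2^8*C τ^7 + (-2:R3)*X 1^3*X 2^8*C t*C τ^4 + (2:R3)*X 1^3*X 2^8*C t*C τ^5 + (-2:R3)*X 1^3*X 2^8*C t*C τ^6 + (-1:R3)*X 1^4*X 2^7*C τ^3 + X 1^4*X 2^7*C τ^4) : R3) +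
      (((-4:R3)*X 1^4*X 2^7*C τ^5 + (3:R3)*X 1^4*X 2^7*C τ^6 + (-4:R3)*X 1^4*X 2^7*C τ^7 + X 1^4*X 2^7*C τ^8 + (-1:R3)*X 1^4*X 2^7*C τ^9 + (-1:R3)*X 1^4*X 2^7*C t*C τ^2 + X 1^4*X 2^7*C t*C τ^3 + (-4:R3)*X 1^4*X 2^7*C t*C τ^4) : R3) +
      (((3:R3)*X 1^4*X 2^7*C t*C τ^5 + (-4:R3)*X 1^4*X 2^7*C t*C τ^6 + X 1^4*X 2^7*C t*C τ^7 + (-1:R3)*X 1^4*X 2^7*C t*C τ^8 + (2:R3)*X 1^5*X 2^6*C τ + (-2:R3)*X 1^5*X 2^6*C τ^2 + (-2:R3)*X 1^5*X 2^6*C τ^3 + (4:R3)*X 1^5*X 2^6*C τ^4) : R3) +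
      (((-6:R3)*X 1^5*X 2^6*C τ^5 + (2:R3)*X 1^5*X 2^6*C τ^6 + (-4:R3)*X 1^5*X 2^6*C τ^7 + (2:R3)*X 1^5*X 2^6*C τ^8 + (-2:R3)*X 1^5*X 2^6*C τ^9 + (-2:R3)*X 1^5*X 2^6*C t*C τ^2 + (4:R3)*X 1^5*X 2^6*C t*C τ^3 + (-6:R3)*X 1^5*X 2^6*C t*C τ^4) : R3) +
      (((2:R3)*X 1^5*X 2^6*C t*C τ^5 + (-4:R3)*X 1^5*X 2^6*C t*C τ^6 + (2:R3)*X 1^5*X 2^6*C t*C τ^7 + (-2:R3)*X 1^5*X 2^6*C t*C τ^8 + (-1:R3)*X 1^6*X 2^5*C τ^3 + X 1^6*X 2^5*C τ^4 + (-4:R3)*X 1^6*X 2^5*C τ^5 + (3:R3)*X 1^6*X 2^5*C τ^6) : R3) +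
      (((-4:R3)*X 1^6*X 2^5*C τ^7 + X 1^6*X 2^5*C τ^8 + (-1:R3)*X 1^6*X 2^5*C τ^9 + (-1:R3)*X 1^6*X 2^5*C t*C τ^2 + X 1^6*X 2^5*C t*C τ^3 + (-4:R3)*X 1^6*X 2^5*C t*C τ^4 + (3:R3)*X 1^6*X 2^5*C t*C τ^5 + (-4:R3)*X 1^6*X 2^5*C t*C τ^6) : R3) +
      ((X 1^6*X 2^5*C t*C τ^7 + (-1:R3)*X 1^6*X 2^5*C t*C τ^8 + (-2:R3)*X 1^7*X 2^4*C τ^5 + (2:R3)*X 1^7*X 2^4*C τ^6 + (-2:R3)*X 1^7*X 2^4*C τ^7 + (-2:R3)*X 1^7*X 2^4*C t*C τ^4 + (2:R3)*X 1^7*X 2^4*C t*C τ^5 + (-2:R3)*X 1^7*X 2^4*C t*C τ^6) : R3) +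
      ((X 1^8*X 2^3*C τ^4 + (-1:R3)*X 1^8*X 2^3*C τ^5 + X 1^8*X 2^3*C t*C τ^3 + (-1:R3)*X 1^8*X 2^3*C t*C τ^4 + X 0*X 2^10 + (-1:R3)*X 0*X 2^10*C τ + X 0*X 2^10*C τ^3 + (-1:R3)*X 0*X 2^10*C τ^4) : R3) +
      (((-2:R3)*X 0*X 1*X 2^9*C τ^4 + (2:R3)*X 0*X 1*X 2^9*C τ^5 + (-2:R3)*X 0*X 1*X 2^9*C τ^6 + (-1:R3)*X 0*X 1^2*X 2^8*C τ^2 + X 0*X 1^2*X 2^8*C τ^3 + (-4:R3)*X 0*X 1^2*X 2^8*C τ^4 + X 0*X 1^2*X 2^8*C τ^5 + (-4:R3)*X 0*X 1^2*X 2^8*C τ^6) : R3) +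
      ((X 0*X 1^2*X 2^8*C τ^7 + (-1:R3)*X 0*X 1^2*X 2^8*C τ^8 + (-2:R3)*X 0*X 1^2*X 2^8*C t*C τ^4 + (-2:R3)*X 0*X 1^3*X 2^7*C τ^2 + (-4:R3)*X 0*X 1^3*X 2^7*C τ^3 + (-2:R3)*X 0*X 1^3*X 2^7*C τ^4 + (-2:R3)*X 0*X 1^3*X 2^7*C τ^5 + (-6:R3)*X 0*X 1^3*X 2^7*C τ^6) : R3) +
      (((-2:R3)*X 0*X 1^3*X 2^7*C τ^8 + (-8:R3)*X 0*X 1^3*X 2^7*C t*C τ^2 + (4:R3)*X 0*X 1^3*X 2^7*C t*C τ^3 + (-4:R3)*X 0*X 1^3*X 2^7*C t*C τ^4 + (-2:R3)*X 0*X 1^3*X 2^7*C t*C τ^5 + (-2:R3)*X 0*X 1^3*X 2^7*C t*C τ^6 + (-3:R3)*X 0*X 1^4*X 2^6*C τ^2 + (-3:R3)*X 0*X 1^4*X 2^6*C τ^3) : R3) +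
      (((-2:R3)*X 0*X 1^4*X 2^6*C τ^4 + (-9:R3)*X 0*X 1^4*X 2^6*C τ^5 + (-2:R3)*X 0*X 1^4*X 2^6*C τ^6 + (-3:R3)*X 0*X 1^4*X 2^6*C τ^7 + (-3:R3)*X 0*X 1^4*X 2^6*C τ^8 + (-2:R3)*X 0*X 1^4*X 2^6*C t*C τ + (-4:R3)*X 0*X 1^4*X 2^6*C t*C τ^2 + (2:R3)*X 0*X 1^4*X 2^6*C t*C τ^3) : R3) +
      (((-12:R3)*X 0*X 1^4*X 2^6*C t*C τ^4 + (2:R3)*X 0*X 1^4*X 2^6*C t*C τ^5 + (-4:R3)*X 0*X 1^4*X 2^6*C t*C τ^6 + (-2:R3)*X 0*X 1^4*X 2^6*C t*C τ^7 + (-2:R3)*X 0*X 1^5*X 2^5*C τ^2 + (-4:R3)*X 0*X 1^5*X 2^5*C τ^3 + (-10:R3)*X 0*X 1^5*X 2^5*C τ^5 + (-4:R3)*X 0*X 1^5*X 2^5*C τ^7) : R3) +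
      (((-2:R3)*X 0*X 1^5*X 2^5*C τ^8 + (-2:R3)*X 0*X 1^5*X 2^5*C t*C τ + (-4:R3)*X 0*X 1^5*X 2^5*C t*C τ^2 + (2:R3)*X 0*X 1^5*X 2^5*C t*C τ^3 + (-12:R3)*X 0*X 1^5*X 2^5*C t*C τ^4 + (2:R3)*X 0*X 1^5*X 2^5*C t*C τ^5 + (-4:R3)*X 0*X 1^5*X 2^5*C t*C τ^6 + (-2:R3)*X 0*X 1^5*X 2^5*C t*C τ^7) : R3) +
      (((-7:R3)*X 0*X 1^6*X 2^4*C τ^3 + (3:R3)*X 0*X 1^6*X 2^4*C τ^4 + (-4:R3)*X 0*X 1^6*X 2^4*C τ^5 + (-2:R3)*X 0*X 1^6*X 2^4*C τ^6 + (-2:R3)*X 0*X 1^6*X 2^4*C τ^7 + (-3:R3)*X 0*X 1^6*X 2^4*C t*C τ^2 + (-1:R3)*X 0*X 1^6*X 2^4*C t*C τ^3 + (-4:R3)*X 0*X 1^6*X 2^4*C t*C τ^4) : R3) +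
      (((-2:R3)*X 0*X 1^6*X 2^4*C t*C τ^5 + (-2:R3)*X 0*X 1^6*X 2^4*C t*C τ^6 + (-2:R3)*X 0*X 1^7*X 2^3*C τ^5 + (-2:R3)*X 0*X 1^7*X 2^3*C t*C τ^4 + (-2:R3)*X 0^2*X 2^9*C τ^4 + (-8:R3)*X 0^2*X 1*X 2^8*C τ^2 + (4:R3)*X 0^2*X 1*X 2^8*C τ^3 + (-4:R3)*X 0^2*X 1*X 2^8*C τ^4) : R3) +
      (((-2:R3)*X 0^2*X 1*X 2^8*C τ^5 + (-2:R3)*X 0^2*X 1*X 2^8*C τ^6 + (-2:R3)*X 0^2*X 1^2*X 2^7*C τ + (-4:R3)*X 0^2*X 1^2*X 2^7*C τ^2 + X 0^2*X 1^2*X 2^7*C τ^3 + (-15:R3)*X 0^2*X 1^2*X 2^7*C τ^4 + X 0^2*X 1^2*X 2^7*C τ^5 + (-4:R3)*X 0^2*X 1^2*X 2^7*C τ^6) : R3) +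
      (((-2:R3)*X 0^2*X 1^2*X 2^7*C τ^7 + (-1:R3)*X 0^2*X 1^2*X 2^7*C t*C τ^2 + (-3:R3)*X 0^2*X 1^2*X 2^7*C t*C τ^3 + (-1:R3)*X 0^2*X 1^2*X 2^7*C t*C τ^4 + (-2:R3)*X 0^2*X 1^3*X 2^6*C τ + (-8:R3)*X 0^2*X 1^3*X 2^6*C τ^2 + (-2:R3)*X 0^2*X 1^3*X 2^6*C τ^3 + (-16:R3)*X 0^2*X 1^3*X 2^6*C τ^4) : R3) +
      (((-2:R3)*X 0^2*X 1^3*X 2^6*C τ^5 + (-8:R3)*X 0^2*X 1^3*X 2^6*C τ^6 + (-2:R3)*X 0^2*X 1^3*X 2^6*C τ^7 + (-4:R3)*X 0^2*X 1^3*X 2^6*C t*C τ + (-4:R3)*X 0^2*X 1^3*X 2^6*C t*C τ^2 + (-4:R3)*X 0^2*X 1^3*X 2^6*C t*C τ^3 + (-4:R3)*X 0^2*X 1^3*X 2^6*C t*C τ^4 + (-4:R3)*X 0^2*X 1^3*X 2^6*C t*C τ^5) : R3) +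
      (((-1:R3)*X 0^2*X 1^4*X 2^5*C τ + (-12:R3)*X 0^2*X 1^4*X 2^5*C τ^2 + (-1:R3)*X 0^2*X 1^4*X 2^5*C τ^3 + (-11:R3)*X 0^2*X 1^4*X 2^5*C τ^4 + (-4:R3)*X 0^2*X 1^4*X 2^5*C τ^5 + (-9:R3)*X 0^2*X 1^4*X 2^5*C τ^6 + (-1:R3)*X 0^2*X 1^4*X 2^5*C τ^7 + (-1:R3)*X 0^2*X 1^4*X 2^5*C t) : R3) +
      (((-8:R3)*X 0^2*X 1^4*X 2^5*C t*C τ + (-1:R3)*X 0^2*X 1^4*X 2^5*C t*C τ^2 + (-7:R3)*X 0^2*X 1^4*X 2^5*C t*C τ^3 + (-2:R3)*X 0^2*X 1^4*X 2^5*C t*C τ^4 + (-7:R3)*X 0^2*X 1^4*X 2^5*C t*C τ^5 + (-1:R3)*X 0^2*X 1^4*X 2^5*C t*C τ^6 + (-4:R3)*X 0^2*X 1^5*X 2^4*C τ^2 + (-4:R3)*X 0^2*X 1^5*X 2^4*C τ^3) : R3) +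
      (((-6:R3)*X 0^2*X 1^5*X 2^4*C τ^4 + (-4:R3)*X 0^2*X 1^5*X 2^4*C τ^5 + (-4:R3)*X 0^2*X 1^5*X 2^4*C τ^6 + (-4:R3)*X 0^2*X 1^5*X 2^4*C t*C τ + (-4:R3)*X 0^2*X 1^5*X 2^4*C t*C τ^2 + (-4:R3)*X 0^2*X 1^5*X 2^4*C t*C τ^3 + (-4:R3)*X 0^2*X 1^5*X 2^4*C t*C τ^4 + (-4:R3)*X 0^2*X 1^5*X 2^4*C t*C τ^5) : R3) +
      (((-1:R3)*X 0^2*X 1^6*X 2^3*C τ^3 + (-3:R3)*X 0^2*X 1^6*X 2^3*C τ^4 + (-1:R3)*X 0^2*X 1^6*X 2^3*C τ^5 + (-1:R3)*X 0^2*X 1^6*X 2^3*C t*C τ^2 + (-3:R3)*X 0^2*X 1^6*X 2^3*C t*C τ^3 + (-1:R3)*X 0^2*X 1^6*X 2^3*C t*C τ^4 + (-4:R3)*X 0^2*X 1^7*X 2^2*C t*C τ^4 + (4:R3)*X 0^2*X 1^7*X 2^2*C t*C τ^5) : R3) +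
      (((-1:R3)*X 0^3*X 2^8*C τ^2 + (-3:R3)*X 0^3*X 2^8*C τ^3 + (-1:R3)*X 0^3*X 2^8*C τ^4 + (-4:R3)*X 0^3*X 1*X 2^7*C τ + (-4:R3)*X 0^3*X 1*X 2^7*C τ^2 + (-4:R3)*X 0^3*X 1*X 2^7*C τ^3 + (-4:R3)*X 0^3*X 1*X 2^7*C τ^4 + (-4:R3)*X 0^3*X 1*X 2^7*C τ^5) : R3) +
      (((-1:R3)*X 0^3*X 1^2*X 2^6 + (-11:R3)*X 0^3*X 1^2*X 2^6*C τ + (-9:R3)*X 0^3*X 1^2*X 2^6*C τ^3 + (-5:R3)*X 0^3*X 1^2*X 2^6*C τ^4 + (-6:R3)*X 0^3*X 1^2*X 2^6*C τ^5 + (-1:R3)*X 0^3*X 1^2*X 2^6*C τ^6 + X 0^3*X 1^2*X 2^6*C t + (-3:R3)*X 0^3*X 1^2*X 2^6*C t*C τ) : R3) +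
      (((-2:R3)*X 0^3*X 1^2*X 2^6*C t*C τ^2 + (-3:R3)*X 0^3*X 1^2*X 2^6*C t*C τ^3 + X 0^3*X 1^2*X 2^6*C t*C τ^4 + (-6:R3)*X 0^3*X 1^3*X 2^5*C τ + (-12:R3)*X 0^3*X 1^3*X 2^5*C τ^2 + (-4:R3)*X 0^3*X 1^3*X 2^5*C τ^3 + (-12:R3)*X 0^3*X 1^3*X 2^5*C τ^4 + (-4:R3)*X 0^3*X 1^3*X 2^5*C τ^5) : R3) +
      (((-2:R3)*X 0^3*X 1^3*X 2^5*C τ^6 + (2:R3)*X 0^3*X 1^3*X 2^5*C τ^7 + (-2:R3)*X 0^3*X 1^3*X 2^5*C t + (-8:R3)*X 0^3*X 1^3*X 2^5*C t*C τ + (-8:R3)*X 0^3*X 1^3*X 2^5*C t*C τ^3 + (-2:R3)*X 0^3*X 1^3*X 2^5*C t*C τ^5 + (2:R3)*X 0^3*X 1^3*X 2^5*C t*C τ^6 + (-2:R3)*X 0^3*X 1^4*X 2^4*C τ) : R3) +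
      (((-9:R3)*X 0^3*X 1^4*X 2^4*C τ^2 + (-2:R3)*X 0^3*X 1^4*X 2^4*C τ^3 + (-10:R3)*X 0^3*X 1^4*X 2^4*C τ^4 + (2:R3)*X 0^3*X 1^4*X 2^4*C τ^5 + (-3:R3)*X 0^3*X 1^4*X 2^4*C τ^6 + (4:R3)*X 0^3*X 1^4*X 2^4*C τ^7 + (-1:R3)*X 0^3*X 1^4*X 2^4*C τ^8 + X 0^3*X 1^4*X 2^4*C τ^9) : R3) +
      (((-2:R3)*X 0^3*X 1^4*X 2^4*C t + (-8:R3)*X 0^3*X 1^4*X 2^4*C t*C τ + X 0^3*X 1^4*X 2^4*C t*C τ^2 + (-9:R3)*X 0^3*X 1^4*X 2^4*C t*C τ^3 + (2:R3)*X 0^3*X 1^4*X 2^4*C t*C τ^4 + (-3:R3)*X 0^3*X 1^4*X 2^4*C t*C τ^5 + (4:R3)*X 0^3*X 1^4*X 2^4*C t*C τ^6 + (-1:R3)*X 0^3*X 1^4*X 2^4*C t*C τ^7) : R3) +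
      ((X 0^3*X 1^4*X 2^4*C t*C τ^8 + (-2:R3)*X 0^3*X 1^5*X 2^3*C τ^2 + (-2:R3)*X 0^3*X 1^5*X 2^3*C τ^4 + (2:R3)*X 0^3*X 1^5*X 2^3*C τ^5 + (-2:R3)*X 0^3*X 1^5*X 2^3*C τ^6 + (4:R3)*X 0^3*X 1^5*X 2^3*C τ^7 + (-2:R3)*X 0^3*X 1^5*X 2^3*C τ^8 + (2:R3)*X 0^3*X 1^5*X 2^3*C τ^9) : R3) +
      (((-2:R3)*X 0^3*X 1^5*X 2^3*C t*C τ + (-2:R3)*X 0^3*X 1^5*X 2^3*C t*C τ^5 + (4:R3)*X 0^3*X 1^5*X 2^3*C t*C τ^6 + (-2:R3)*X 0^3*X 1^5*X 2^3*C t*C τ^7 + (2:R3)*X 0^3*X 1^5*X 2^3*C t*C τ^8 + X 0^3*X 1^6*X 2^2*C τ^3 + (-1:R3)*X 0^3*X 1^6*X 2^2*C τ^4 + (4:R3)*X 0^3*X 1^6*X 2^2*C τ^5) : R3) +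
      (((-3:R3)*X 0^3*X 1^6*X 2^2*C τ^6 + (4:R3)*X 0^3*X 1^6*X 2^2*C τ^7 + (-1:R3)*X 0^3*X 1^6*X 2^2*C τ^8 + X 0^3*X 1^6*X 2^2*C τ^9 + X 0^3*X 1^6*X 2^2*C t*C τ^2 + (-1:R3)*X 0^3*X 1^6*X 2^2*C t*C τ^3 + (4:R3)*X 0^3*X 1^6*X 2^2*C t*C τ^4 + (-3:R3)*X 0^3*X 1^6*X 2^2*C t*C τ^5) : R3) +
      (((4:R3)*X 0^3*X 1^6*X 2^2*C t*C τ^6 + (-1:R3)*X 0^3*X 1^6*X 2^2*C t*C τ^7 + X 0^3*X 1^6*X 2^2*C t*C τ^8 + (2:R3)*X 0^3*X 1^7*X 2*C τ^5 + (-2:R3)*X 0^3*X 1^7*X 2*C τ^6 + (2:R3)*X 0^3*X 1^7*X 2*C τ^7 + (2:R3)*X 0^3*X 1^7*X 2*C t*C τ^4 + (-2:R3)*X 0^3*X 1^7*X 2*C t*C τ^5) : R3) +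
      (((2:R3)*X 0^3*X 1^7*X 2*C t*C τ^6 + X 0^3*X 1^8*C t*C τ^6 + (-1:R3)*X 0^3*X 1^8*C t*C τ^7 + X 0^4*X 2^7 + (-3:R3)*X 0^4*X 2^7*C τ + (-2:R3)*X 0^4*X 2^7*C τ^2 + (-3:R3)*X 0^4*X 2^7*C τ^3 + X 0^4*X 2^7*C τ^4) : R3) +
      (((-2:R3)*X 0^4*X 1*X 2^6 + (-8:R3)*X 0^4*X 1*X 2^6*C τ + (-8:R3)*X 0^4*X 1*X 2^6*C τ^3 + (-2:R3)*X 0^4*X 1*X 2^6*C τ^5 + (2:R3)*X 0^4*X 1*X 2^6*C τ^6 + (-2:R3)*X 0^4*X 1^2*X 2^5 + (-9:R3)*X 0^4*X 1^2*X 2^5*C τ + (-2:R3)*X 0^4*X 1^2*X 2^5*C τ^2) : R3) +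
      (((-10:R3)*X 0^4*X 1^2*X 2^5*C τ^3 + (2:R3)*X 0^4*X 1^2*X 2^5*C τ^4 + (-1:R3)*X 0^4*X 1^2*X 2^5*C τ^5 + (4:R3)*X 0^4*X 1^2*X 2^5*C τ^6 + (-1:R3)*X 0^4*X 1^2*X 2^5*C τ^7 + X 0^4*X 1^2*X 2^5*C τ^8 + (-1:R3)*X 0^4*X 1^2*X 2^5*C t + (-3:R3)*X 0^4*X 1^2*X 2^5*C t*C τ) : R3) +
      (((-1:R3)*X 0^4*X 1^2*X 2^5*C t*C τ^2 + (2:R3)*X 0^4*X 1^2*X 2^5*C t*C τ^4 + (-6:R3)*X 0^4*X 1^3*X 2^4*C τ + (-4:R3)*X 0^4*X 1^3*X 2^4*C τ^2 + (14:R3)*X 0^4*X 1^3*X 2^4*C τ^3 + (-14:R3)*X 0^4*X 1^3*X 2^4*C τ^4 + (2:R3)*X 0^4*X 1^3*X 2^4*C τ^5 + (6:R3)*X 0^4*X 1^3*X 2^4*C τ^6) : R3) +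
      (((2:R3)*X 0^4*X 1^3*X 2^4*C τ^8 + (-4:R3)*X 0^4*X 1^3*X 2^4*C t + (-4:R3)*X 0^4*X 1^3*X 2^4*C t*C τ + (4:R3)*X 0^4*X 1^3*X 2^4*C t*C τ^2 + (-4:R3)*X 0^4*X 1^3*X 2^4*C t*C τ^3 + (4:R3)*X 0^4*X 1^3*X 2^4*C t*C τ^4 + (2:R3)*X 0^4*X 1^3*X 2^4*C t*C τ^5 + (2:R3)*X 0^4*X 1^3*X 2^4*C t*C τ^6) : R3) +
      (((-1:R3)*X 0^4*X 1^4*X 2^3*C τ + (2:R3)*X 0^4*X 1^4*X 2^3*C τ^3 + (2:R3)*X 0^4*X 1^4*X 2^3*C τ^4 + (9:R3)*X 0^4*X 1^4*X 2^3*C τ^5 + (2:R3)*X 0^4*X 1^4*X 2^3*C τ^6 + (3:R3)*X 0^4*X 1^4*X 2^3*C τ^7 + (3:R3)*X 0^4*X 1^4*X 2^3*C τ^8 + (-1:R3)*X 0^4*X 1^4*X 2^3*C t) : R3) +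
      (((-1:R3)*X 0^4*X 1^4*X 2^3*C t*C τ + (3:R3)*X 0^4*X 1^4*X 2^3*C t*C τ^2 + (-2:R3)*X 0^4*X 1^4*X 2^3*C t*C τ^3 + (12:R3)*X 0^4*X 1^4*X 2^3*C t*C τ^4 + (-2:R3)*X 0^4*X 1^4*X 2^3*C t*C τ^5 + (4:R3)*X 0^4*X 1^4*X 2^3*C t*C τ^6 + (2:R3)*X 0^4*X 1^4*X 2^3*C t*C τ^7 + (2:R3)*X 0^4*X 1^5*X 2^2*C τ^2) : R3) +
      (((4:R3)*X 0^4*X 1^5*X 2^2*C τ^3 + (10:R3)*X 0^4*X 1^5*X 2^2*C τ^5 + (4:R3)*X 0^4*X 1^5*X 2^2*C τ^7 + (2:R3)*X 0^4*X 1^5*X 2^2*C τ^8 + (2:R3)*X 0^4*X 1^5*X 2^2*C t*C τ + (4:R3)*X 0^4*X 1^5*X 2^2*C t*C τ^2 + (-2:R3)*X 0^4*X 1^5*X 2^2*C t*C τ^3 + (12:R3)*X 0^4*X 1^5*X 2^2*C t*C τ^4) : R3) +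
      (((-2:R3)*X 0^4*X 1^5*X 2^2*C t*C τ^5 + (4:R3)*X 0^4*X 1^5*X 2^2*C t*C τ^6 + (2:R3)*X 0^4*X 1^5*X 2^2*C t*C τ^7 + (2:R3)*X 0^4*X 1^6*X 2*C τ^3 + (2:R3)*X 0^4*X 1^6*X 2*C τ^4 + (4:R3)*X 0^4*X 1^6*X 2*C τ^5 + X 0^4*X 1^6*X 2*C τ^6 + (3:R3)*X 0^4*X 1^6*X 2*C τ^7) : R3) +
      (((2:R3)*X 0^4*X 1^6*X 2*C t*C τ^2 + (2:R3)*X 0^4*X 1^6*X 2*C t*C τ^3 + (4:R3)*X 0^4*X 1^6*X 2*C t*C τ^4 + X 0^4*X 1^6*X 2*C t*C τ^5 + (3:R3)*X 0^4*X 1^6*X 2*C t*C τ^6 + (2:R3)*X 0^4*X 1^7*C τ^5 + (2:R3)*X 0^4*X 1^7*C t*C τ^4 + (-1:R3)*X 0^5*X 2^6) : R3) +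
      (((-3:R3)*X 0^5*X 2^6*C τ + (-1:R3)*X 0^5*X 2^6*C τ^2 + (2:R3)*X 0^5*X 2^6*C τ^4 + (-4:R3)*X 0^5*X 1*X 2^5 + (-4:R3)*X 0^5*X 1*X 2^5*C τ + (4:R3)*X 0^5*X 1*X 2^5*C τ^2 + (-4:R3)*X 0^5*X 1*X 2^5*C τ^3 + (4:R3)*X 0^5*X 1*X 2^5*C τ^4) : R3) +
      (((2:R3)*X 0^5*X 1*X 2^5*C τ^5 + (2:R3)*X 0^5*X 1*X 2^5*C τ^6 + (-2:R3)*X 0^5*X 1*X 2^5*C t*C τ + (2:R3)*X 0^5*X 1*X 2^5*C t*C τ^2 + (-1:R3)*X 0^5*X 1^2*X 2^4 + (-3:R3)*X 0^5*X 1^2*X 2^4*C τ + (3:R3)*X 0^5*X 1^2*X 2^4*C τ^2 + (-1:R3)*X 0^5*X 1^2*X 2^4*C τ^3) : R3) +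
      (((15:R3)*X 0^5*X 1^2*X 2^4*C τ^4 + (-1:R3)*X 0^5*X 1^2*X 2^4*C τ^5 + (4:R3)*X 0^5*X 1^2*X 2^4*C τ^6 + (2:R3)*X 0^5*X 1^2*X 2^4*C τ^7 + (-2:R3)*X 0^5*X 1^2*X 2^4*C t + X 0^5*X 1^2*X 2^4*C t*C τ^2 + (3:R3)*X 0^5*X 1^2*X 2^4*C t*C τ^3 + X 0^5*X 1^2*X 2^4*C t*C τ^4) : R3) +
      (((8:R3)*X 0^5*X 1^3*X 2^3*C τ^2 + (2:R3)*X 0^5*X 1^3*X 2^3*C τ^3 + (16:R3)*X 0^5*X 1^3*X 2^3*C τ^4 + (2:R3)*X 0^5*X 1^3*X 2^3*C τ^5 + (8:R3)*X 0^5*X 1^3*X 2^3*C τ^6 + (2:R3)*X 0^5*X 1^3*X 2^3*C τ^7 + (-2:R3)*X 0^5*X 1^3*X 2^3*C t + (4:R3)*X 0^5*X 1^3*X 2^3*C t*C τ) : R3) +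
      (((4:R3)*X 0^5*X 1^3*X 2^3*C t*C τ^2 + (4:R3)*X 0^5*X 1^3*X 2^3*C t*C τ^3 + (4:R3)*X 0^5*X 1^3*X 2^3*C t*C τ^4 + (4:R3)*X 0^5*X 1^3*X 2^3*C t*C τ^5 + X 0^5*X 1^4*X 2^2*C τ + (9:R3)*X 0^5*X 1^4*X 2^2*C τ^2 + (4:R3)*X 0^5*X 1^4*X 2^2*C τ^3 + (11:R3)*X 0^5*X 1^4*X 2^2*C τ^4) : R3) +
      (((-5:R3)*X 0^5*X 1^4*X 2^2*C τ^5 + (18:R3)*X 0^5*X 1^4*X 2^2*C τ^6 + X 0^5*X 1^4*X 2^2*C τ^7 + X 0^5*X 1^4*X 2^2*C t + (7:R3)*X 0^5*X 1^4*X 2^2*C t*C τ + (2:R3)*X 0^5*X 1^4*X 2^2*C t*C τ^2 + (7:R3)*X 0^5*X 1^4*X 2^2*C t*C τ^3 + (2:R3)*X 0^5*X 1^4*X 2^2*C t*C τ^4) : R3) +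
      (((7:R3)*X 0^5*X 1^4*X 2^2*C t*C τ^5 + X 0^5*X 1^4*X 2^2*C t*C τ^6 + (4:R3)*X 0^5*X 1^5*X 2*C τ^2 + (4:R3)*X 0^5*X 1^5*X 2*C τ^3 + (6:R3)*X 0^5*X 1^5*X 2*C τ^4 + (4:R3)*X 0^5*X 1^5*X 2*C τ^5 + (4:R3)*X 0^5*X 1^5*X 2*C τ^6 + (4:R3)*X 0^5*X 1^5*X 2*C t*C τ) : R3) +
      (((4:R3)*X 0^5*X 1^5*X 2*C t*C τ^2 + (4:R3)*X 0^5*X 1^5*X 2*C t*C τ^3 + (4:R3)*X 0^5*X 1^5*X 2*C t*C τ^4 + (4:R3)*X 0^5*X 1^5*X 2*C t*C τ^5 + X 0^5*X 1^6*C τ^3 + (3:R3)*X 0^5*X 1^6*C τ^4 + X 0^5*X 1^6*C τ^5 + X 0^5*X 1^6*C t*C τ^2) : R3) +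
      (((3:R3)*X 0^5*X 1^6*C t*C τ^3 + X 0^5*X 1^6*C t*C τ^4 + (-2:R3)*X 0^6*X 2^5 + X 0^6*X 2^5*C τ^2 + (3:R3)*X 0^6*X 2^5*C τ^3 + X 0^6*X 2^5*C τ^4 + (-2:R3)*X 0^6*X 1*X 2^4 + (4:R3)*X 0^6*X 1*X 2^4*C τ) : R3) +
      (((4:R3)*X 0^6*X 1*X 2^4*C τ^2 + (4:R3)*X 0^6*X 1*X 2^4*C τ^3 + (4:R3)*X 0^6*X 1*X 2^4*C τ^4 + (4:R3)*X 0^6*X 1*X 2^4*C τ^5 + X 0^6*X 1^2*X 2^3 + (6:R3)*X 0^6*X 1^2*X 2^3*C τ + (5:R3)*X 0^6*X 1^2*X 2^3*C τ^2 + (9:R3)*X 0^6*X 1^2*X 2^3*C τ^3) : R3) +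
      (((4:R3)*X 0^6*X 1^2*X 2^3*C τ^4 + (7:R3)*X 0^6*X 1^2*X 2^3*C τ^5 + X 0^6*X 1^2*X 2^3*C τ^6 + (-1:R3)*X 0^6*X 1^2*X 2^3*C t + (3:R3)*X 0^6*X 1^2*X 2^3*C t*C τ + (2:R3)*X 0^6*X 1^2*X 2^3*C t*C τ^2 + (6:R3)*X 0^6*X 1^2*X 2^3*C t*C τ^3 + (-4:R3)*X 0^6*X 1^2*X 2^3*C t*C τ^4) : R3) +
      (((6:R3)*X 0^6*X 1^3*X 2^2*C τ + (12:R3)*X 0^6*X 1^3*X 2^2*C τ^2 + (4:R3)*X 0^6*X 1^3*X 2^2*C τ^3 + (12:R3)*X 0^6*X 1^3*X 2^2*C τ^4 + (6:R3)*X 0^6*X 1^3*X 2^2*C τ^5 + (2:R3)*X 0^6*X 1^3*X 2^2*C t + (8:R3)*X 0^6*X 1^3*X 2^2*C t*C τ + (8:R3)*X 0^6*X 1^3*X 2^2*C t*C τ^3) : R3) +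
      (((2:R3)*X 0^6*X 1^3*X 2^2*C t*C τ^4 + (2:R3)*X 0^6*X 1^4*X 2*C τ + (9:R3)*X 0^6*X 1^4*X 2*C τ^2 + (3:R3)*X 0^6*X 1^4*X 2*C τ^3 + (9:R3)*X 0^6*X 1^4*X 2*C τ^4 + (2:R3)*X 0^6*X 1^4*X 2*C τ^5 + (2:R3)*X 0^6*X 1^4*X 2*C t + (8:R3)*X 0^6*X 1^4*X 2*C t*C τ) : R3) +
      (((8:R3)*X 0^6*X 1^4*X 2*C t*C τ^3 + (2:R3)*X 0^6*X 1^4*X 2*C t*C τ^4 + (2:R3)*X 0^6*X 1^5*C τ^2 + (2:R3)*X 0^6*X 1^5*C τ^3 + (4:R3)*X 0^6*X 1^5*C τ^4 + (-2:R3)*X 0^6*X 1^5*C τ^5 + (2:R3)*X 0^6*X 1^5*C τ^7 + (-2:R3)*X 0^6*X 1^5*C τ^8) : R3) +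
      (((2:R3)*X 0^6*X 1^5*C t*C τ + (2:R3)*X 0^6*X 1^5*C t*C τ^2 + (4:R3)*X 0^6*X 1^5*C t*C τ^3 + (-2:R3)*X 0^6*X 1^5*C t*C τ^4 + (-1:R3)*X 0^7*X 2^4 + (3:R3)*X 0^7*X 2^4*C τ + (2:R3)*X 0^7*X 2^4*C τ^2 + (2:R3)*X 0^7*X 2^4*C τ^3) : R3) +
      ((X 0^7*X 2^4*C t*C τ^2 + (-1:R3)*X 0^7*X 2^4*C t*C τ^3 + (2:R3)*X 0^7*X 1*X 2^3 + (8:R3)*X 0^7*X 1*X 2^3*C τ + (8:R3)*X 0^7*X 1*X 2^3*C τ^3 + (2:R3)*X 0^7*X 1*X 2^3*C τ^4 + (2:R3)*X 0^7*X 1^2*X 2^2 + (9:R3)*X 0^7*X 1^2*X 2^2*C τ) : R3) +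
      (((3:R3)*X 0^7*X 1^2*X 2^2*C τ^2 + (9:R3)*X 0^7*X 1^2*X 2^2*C τ^3 + (2:R3)*X 0^7*X 1^2*X 2^2*C τ^4 + X 0^7*X 1^2*X 2^2*C t + (3:R3)*X 0^7*X 1^2*X 2^2*C t*C τ + X 0^7*X 1^2*X 2^2*C t*C τ^2 + (6:R3)*X 0^7*X 1^3*X 2*C τ + (6:R3)*X 0^7*X 1^3*X 2*C τ^2) : R3) +
      (((2:R3)*X 0^7*X 1^3*X 2*C τ^3 + (4:R3)*X 0^7*X 1^3*X 2*C τ^4 + (4:R3)*X 0^7*X 1^3*X 2*C t + (4:R3)*X 0^7*X 1^3*X 2*C t*C τ + (-2:R3)*X 0^7*X 1^3*X 2*C t*C τ^2 + (6:R3)*X 0^7*X 1^3*X 2*C t*C τ^3 + (-2:R3)*X 0^7*X 1^3*X 2*C t*C τ^5 + (2:R3)*X 0^7*X 1^3*X 2*C t*C τ^6) : R3) +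
      ((X 0^7*X 1^4*C τ + (3:R3)*X 0^7*X 1^4*C τ^2 + X 0^7*X 1^4*C τ^3 + X 0^7*X 1^4*C t + (3:R3)*X 0^7*X 1^4*C t*C τ + X 0^7*X 1^4*C t*C τ^2 + X 0^8*X 2^3 + (3:R3)*X 0^8*X 2^3*C τ) : R3) +
      ((X 0^8*X 2^3*C τ^2 + (4:R3)*X 0^8*X 1*X 2^2 + (4:R3)*X 0^8*X 1*X 2^2*C τ + (-2:R3)*X 0^8*X 1*X 2^2*C τ^2 + (6:R3)*X 0^8*X 1*X 2^2*C τ^3 + (-2:R3)*X 0^8*X 1*X 2^2*C t*C τ^4 + (2:R3)*X 0^8*X 1*X 2^2*C t*C τ^5 + X 0^8*X 1^2*X 2) : R3) +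
      (((5:R3)*X 0^8*X 1^2*X 2*C τ + X 0^8*X 1^2*X 2*C τ^2 + (2:R3)*X 0^8*X 1^2*X 2*C t + (2:R3)*X 0^8*X 1^3*C τ + (2:R3)*X 0^8*X 1^3*C t + (2:R3)*X 0^9*X 2^2 + (2:R3)*X 0^9*X 1*X 2 + X 0^9*X 1^2*C τ) : R3) +
      (((-1:R3)*X 0^9*X 1^2*C τ^2 + X 0^9*X 1^2*C τ^4 + (-1:R3)*X 0^9*X 1^2*C τ^5 + X 0^9*X 1^2*C t + (-1:R3)*X 0^9*X 1^2*C t*C τ + X 0^9*X 1^2*C t*C τ^3 + (-1:R3)*X 0^9*X 1^2*C t*C τ^4 + X 0^9*X 1^2*C t*C τ^6) : R3) +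
      (((-1:R3)*X 0^9*X 1^2*C t*C τ^7 + X 0^10*X 2 + (-1:R3)*X 0^10*X 2*C τ + X 0^10*X 2*C τ^3 + (-1:R3)*X 0^10*X 2*C τ^4) : R3)) * hu

set_option maxHeartbeats 100000000 in
private theorem comp2 (t : ℂ) :
    pullback Qmap (fun i => Om i + C t * Xi i) 2 =
      C (1:ℂ) * ((Xv + C τ * Yv + C τ * Zv) * (Xv + Yv + C τ ^ 2 * Zv) * (Xv + C τ ^ 2 * Yv + Zv)) ^ 2 * (Om 2 + C (-t - τ) * Xi 2) := by
  have hu : (C τ : R3)^2 + C τ + 1 = 0 := by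
    rw [← C_1, ← C_pow, ← C_add, ← C_add, hτ, C_0]
  simp only [pullback, Fin.sum_univ_three, Qmap, Om, Xi, Xv, Yv, Zv,
    Matrix.cons_val_zero, Matrix.cons_val_one, Matrix.head_cons, Matrix.cons_val_two,
    Matrix.tail_cons, map_add, map_sub, map_mul, map_pow, map_neg, map_one,
    aeval_X, aeval_C, algebraMap_eq, pderiv_X, pderiv_C, C_neg, C_sub, C_add,
    Pi.single_apply, Fin.isValue, mul_one, mul_zero, zero_mul, one_mul,
    add_zero, zero_add, sub_zero, Derivation.leibniz, Derivation.leibniz_pow,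
    smul_eq_mul]
  have e1 : ((2:Fin 3) = 0) = False := by decide
  have e2 : ((1:Fin 3) = 0) = False := by decide
  have e3 : ((0:Fin 3) = 1) = False := by decide
  have e4 : ((2:Fin 3) = 1) = False := by decide
  have e5 : ((0:Fin 3) = 2) = False := by decide
  have e6 : ((1:Fin 3) = 2) = False := by decide
  norm_num [e1,e2,e3,e4,e5,e6]
  linear_combination ((((-1:R3)*X 1^3*X 2^8*C τ + X 1^3*X 2^8*C τ^2 + (-1:R3)*X 1^3*X 2^8*C τ^4 + X 1^3*X 2^8*C τ^5 + (-1:R3)*X 1^3*X 2^8*C t + X 1^3*X 2^8*C t*C τ + (-1:R3)*X 1^3*X 2^8*C t*C τ^3 + X 1^3*X 2^8*C t*C τ^4) : R3) +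
      (((2:R3)*X 1^4*X 2^7*C τ^5 + (-2:R3)*X 1^4*X 2^7*C τ^6 + (2:R3)*X 1^4*X 2^7*C τ^7 + (2:R3)*X 1^4*X 2^7*C t*C τ^4 + (-2:R3)*X 1^4*X 2^7*C t*C τ^5 + (2:R3)*X 1^4*X 2^7*C t*C τ^6 + X 1^5*X 2^6*C τ^3 + (-1:R3)*X 1^5*X 2^6*C τ^4) : R3) +
      (((4:R3)*X 1^5*X 2^6*C τ^5 + (-3:R3)*X 1^5*X 2^6*C τ^6 + (4:R3)*X 1^5*X 2^6*C τ^7 + (-1:R3)*X 1^5*X 2^6*C τ^8 + X 1^5*X 2^6*C τ^9 + X 1^5*X 2^6*C t*C τ^2 + (-1:R3)*X 1^5*X 2^6*C t*C τ^3 + (4:R3)*X 1^5*X 2^6*C t*C τ^4) : R3) +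
      (((-3:R3)*X 1^5*X 2^6*C t*C τ^5 + (4:R3)*X 1^5*X 2^6*C t*C τ^6 + (-1:R3)*X 1^5*X 2^6*C t*C τ^7 + X 1^5*X 2^6*C t*C τ^8 + (-2:R3)*X 1^6*X 2^5*C τ + (2:R3)*X 1^6*X 2^5*C τ^2 + (2:R3)*X 1^6*X 2^5*C τ^3 + (-4:R3)*X 1^6*X 2^5*C τ^4) : R3) +
      (((6:R3)*X 1^6*X 2^5*C τ^5 + (-2:R3)*X 1^6*X 2^5*C τ^6 + (4:R3)*X 1^6*X 2^5*C τ^7 + (-2:R3)*X 1^6*X 2^5*C τ^8 + (2:R3)*X 1^6*X 2^5*C τ^9 + (2:R3)*X 1^6*X 2^5*C t*C τ^2 + (-4:R3)*X 1^6*X 2^5*C t*C τ^3 + (6:R3)*X 1^6*X 2^5*C t*C τ^4) : R3) +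
      (((-2:R3)*X 1^6*X 2^5*C t*C τ^5 + (4:R3)*X 1^6*X 2^5*C t*C τ^6 + (-2:R3)*X 1^6*X 2^5*C t*C τ^7 + (2:R3)*X 1^6*X 2^5*C t*C τ^8 + X 1^7*X 2^4*C τ^3 + (-1:R3)*X 1^7*X 2^4*C τ^4 + (4:R3)*X 1^7*X 2^4*C τ^5 + (-3:R3)*X 1^7*X 2^4*C τ^6) : R3) +
      (((4:R3)*X 1^7*X 2^4*C τ^7 + (-1:R3)*X 1^7*X 2^4*C τ^8 + X 1^7*X 2^4*C τ^9 + X 1^7*X 2^4*C t*C τ^2 + (-1:R3)*X 1^7*X 2^4*C t*C τ^3 + (4:R3)*X 1^7*X 2^4*C t*C τ^4 + (-3:R3)*X 1^7*X 2^4*C t*C τ^5 + (4:R3)*X 1^7*X 2^4*C t*C τ^6) : R3) +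
      (((-1:R3)*X 1^7*X 2^4*C t*C τ^7 + X 1^7*X 2^4*C t*C τ^8 + (2:R3)*X 1^8*X 2^3*C τ^5 + (-2:R3)*X 1^8*X 2^3*C τ^6 + (2:R3)*X 1^8*X 2^3*C τ^7 + (2:R3)*X 1^8*X 2^3*C t*C τ^4 + (-2:R3)*X 1^8*X 2^3*C t*C τ^5 + (2:R3)*X 1^8*X 2^3*C t*C τ^6) : R3) +
      (((-1:R3)*X 1^9*X 2^2*C τ^4 + X 1^9*X 2^2*C τ^5 + (-1:R3)*X 1^9*X 2^2*C t*C τ^3 + X 1^9*X 2^2*C t*C τ^4 + (2:R3)*X 0*X 1^3*X 2^7*C τ^5 + (2:R3)*X 0*X 1^3*X 2^7*C t*C τ^4 + X 0*X 1^4*X 2^6 + (-1:R3)*X 0*X 1^4*X 2^6*C τ) : R3) +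
      (((7:R3)*X 0*X 1^4*X 2^6*C τ^3 + (-3:R3)*X 0*X 1^4*X 2^6*C τ^4 + (4:R3)*X 0*X 1^4*X 2^6*C τ^5 + (2:R3)*X 0*X 1^4*X 2^6*C τ^6 + (2:R3)*X 0*X 1^4*X 2^6*C τ^7 + (8:R3)*X 0*X 1^4*X 2^6*C t*C τ^2 + (-4:R3)*X 0*X 1^4*X 2^6*C t*C τ^3 + (4:R3)*X 0*X 1^4*X 2^6*C t*C τ^4) : R3) +
      (((2:R3)*X 0*X 1^4*X 2^6*C t*C τ^5 + (2:R3)*X 0*X 1^4*X 2^6*C t*C τ^6 + (2:R3)*X 0*X 1^5*X 2^5*C τ^2 + (4:R3)*X 0*X 1^5*X 2^5*C τ^3 + (10:R3)*X 0*X 1^5*X 2^5*C τ^5 + (4:R3)*X 0*X 1^5*X 2^5*C τ^7 + (2:R3)*X 0*X 1^5*X 2^5*C τ^8 + (2:R3)*X 0*X 1^5*X 2^5*C t*C τ) : R3) +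
      (((4:R3)*X 0*X 1^5*X 2^5*C t*C τ^2 + (-2:R3)*X 0*X 1^5*X 2^5*C t*C τ^3 + (12:R3)*X 0*X 1^5*X 2^5*C t*C τ^4 + (-2:R3)*X 0*X 1^5*X 2^5*C t*C τ^5 + (4:R3)*X 0*X 1^5*X 2^5*C t*C τ^6 + (2:R3)*X 0*X 1^5*X 2^5*C t*C τ^7 + (3:R3)*X 0*X 1^6*X 2^4*C τ^2 + (3:R3)*X 0*X 1^6*X 2^4*C τ^3) : R3) +
      (((2:R3)*X 0*X 1^6*X 2^4*C τ^4 + (9:R3)*X 0*X 1^6*X 2^4*C τ^5 + (2:R3)*X 0*X 1^6*X 2^4*C τ^6 + (3:R3)*X 0*X 1^6*X 2^4*C τ^7 + (3:R3)*X 0*X 1^6*X 2^4*C τ^8 + (2:R3)*X 0*X 1^6*X 2^4*C t*C τ + (4:R3)*X 0*X 1^6*X 2^4*C t*C τ^2 + (-2:R3)*X 0*X 1^6*X 2^4*C t*C τ^3) : R3) +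
      (((12:R3)*X 0*X 1^6*X 2^4*C t*C τ^4 + (-2:R3)*X 0*X 1^6*X 2^4*C t*C τ^5 + (4:R3)*X 0*X 1^6*X 2^4*C t*C τ^6 + (2:R3)*X 0*X 1^6*X 2^4*C t*C τ^7 + (2:R3)*X 0*X 1^7*X 2^3*C τ^2 + (4:R3)*X 0*X 1^7*X 2^3*C τ^3 + (2:R3)*X 0*X 1^7*X 2^3*C τ^4 + (2:R3)*X 0*X 1^7*X 2^3*C τ^5) : R3) +
      (((6:R3)*X 0*X 1^7*X 2^3*C τ^6 + (2:R3)*X 0*X 1^7*X 2^3*C τ^8 + (4:R3)*X 0*X 1^7*X 2^3*C t*C τ^2 + (4:R3)*X 0*X 1^7*X 2^3*C t*C τ^4 + (2:R3)*X 0*X 1^7*X 2^3*C t*C τ^5 + (2:R3)*X 0*X 1^7*X 2^3*C t*C τ^6 + X 0*X 1^8*X 2^2*C τ^2 + (-1:R3)*X 0*X 1^8*X 2^2*C τ^3) : R3) +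
      (((4:R3)*X 0*X 1^8*X 2^2*C τ^4 + (-1:R3)*X 0*X 1^8*X 2^2*C τ^5 + (4:R3)*X 0*X 1^8*X 2^2*C τ^6 + (-1:R3)*X 0*X 1^8*X 2^2*C τ^7 + X 0*X 1^8*X 2^2*C τ^8 + (2:R3)*X 0*X 1^8*X 2^2*C t*C τ^4 + (2:R3)*X 0*X 1^9*X 2*C τ^4 + (-2:R3)*X 0*X 1^9*X 2*C τ^5) : R3) +
      (((2:R3)*X 0*X 1^9*X 2*C τ^6 + X 0^2*X 1^3*X 2^6*C τ^3 + (3:R3)*X 0^2*X 1^3*X 2^6*C τ^4 + X 0^2*X 1^3*X 2^6*C τ^5 + X 0^2*X 1^3*X 2^6*C t*C τ^2 + (3:R3)*X 0^2*X 1^3*X 2^6*C t*C τ^3 + X 0^2*X 1^3*X 2^6*C t*C τ^4 + (4:R3)*X 0^2*X 1^4*X 2^5*C τ^2) : R3) +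
      (((4:R3)*X 0^2*X 1^4*X 2^5*C τ^3 + (6:R3)*X 0^2*X 1^4*X 2^5*C τ^4 + (4:R3)*X 0^2*X 1^4*X 2^5*C τ^5 + (4:R3)*X 0^2*X 1^4*X 2^5*C τ^6 + (4:R3)*X 0^2*X 1^4*X 2^5*C t*C τ + (4:R3)*X 0^2*X 1^4*X 2^5*C t*C τ^2 + (4:R3)*X 0^2*X 1^4*X 2^5*C t*C τ^3 + (4:R3)*X 0^2*X 1^4*X 2^5*C t*C τ^4) : R3) +
      (((4:R3)*X 0^2*X 1^4*X 2^5*C t*C τ^5 + X 0^2*X 1^5*X 2^4*C τ + (12:R3)*X 0^2*X 1^5*X 2^4*C τ^2 + X 0^2*X 1^5*X 2^4*C τ^3 + (11:R3)*X 0^2*X 1^5*X 2^4*C τ^4 + (4:R3)*X 0^2*X 1^5*X 2^4*C τ^5 + (9:R3)*X 0^2*X 1^5*X 2^4*C τ^6 + X 0^2*X 1^5*X 2^4*C τ^7) : R3) +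
      ((X 0^2*X 1^5*X 2^4*C t + (6:R3)*X 0^2*X 1^5*X 2^4*C t*C τ + (3:R3)*X 0^2*X 1^5*X 2^4*C t*C τ^2 + (7:R3)*X 0^2*X 1^5*X 2^4*C t*C τ^3 + (2:R3)*X 0^2*X 1^5*X 2^4*C t*C τ^4 + (7:R3)*X 0^2*X 1^5*X 2^4*C t*C τ^5 + X 0^2*X 1^5*X 2^4*C t*C τ^6 + (2:R3)*X 0^2*X 1^6*X 2^3*C τ) : R3) +
      (((8:R3)*X 0^2*X 1^6*X 2^3*C τ^2 + (2:R3)*X 0^2*X 1^6*X 2^3*C τ^3 + (16:R3)*X 0^2*X 1^6*X 2^3*C τ^4 + (2:R3)*X 0^2*X 1^6*X 2^3*C τ^5 + (8:R3)*X 0^2*X 1^6*X 2^3*C τ^6 + (2:R3)*X 0^2*X 1^6*X 2^3*C τ^7 + (4:R3)*X 0^2*X 1^6*X 2^3*C t*C τ + (4:R3)*X 0^2*X 1^6*X 2^3*C t*C τ^2) : R3) +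
      (((4:R3)*X 0^2*X 1^6*X 2^3*C t*C τ^3 + (4:R3)*X 0^2*X 1^6*X 2^3*C t*C τ^4 + (4:R3)*X 0^2*X 1^6*X 2^3*C t*C τ^5 + (2:R3)*X 0^2*X 1^7*X 2^2*C τ + (4:R3)*X 0^2*X 1^7*X 2^2*C τ^2 + (-1:R3)*X 0^2*X 1^7*X 2^2*C τ^3 + (15:R3)*X 0^2*X 1^7*X 2^2*C τ^4 + (-1:R3)*X 0^2*X 1^7*X 2^2*C τ^5) : R3) +
      (((4:R3)*X 0^2*X 1^7*X 2^2*C τ^6 + (2:R3)*X 0^2*X 1^7*X 2^2*C τ^7 + X 0^2*X 1^7*X 2^2*C t*C τ^2 + (3:R3)*X 0^2*X 1^7*X 2^2*C t*C τ^3 + X 0^2*X 1^7*X 2^2*C t*C τ^4 + (2:R3)*X 0^2*X 1^8*X 2*C τ^2 + (2:R3)*X 0^2*X 1^8*X 2*C τ^3 + (4:R3)*X 0^2*X 1^8*X 2*C τ^4) : R3) +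
      (((2:R3)*X 0^2*X 1^8*X 2*C τ^5 + (2:R3)*X 0^2*X 1^8*X 2*C τ^6 + (2:R3)*X 0^2*X 1^8*X 2*C t*C τ^4 + (-2:R3)*X 0^2*X 1^8*X 2*C t*C τ^5 + (2:R3)*X 0^2*X 1^9*C τ^4 + X 0^3*X 2^8*C τ + (-1:R3)*X 0^3*X 2^8*C τ^2 + X 0^3*X 2^8*C τ^4) : R3) +
      (((-1:R3)*X 0^3*X 2^8*C τ^5 + X 0^3*X 2^8*C t + (-1:R3)*X 0^3*X 2^8*C t*C τ + X 0^3*X 2^8*C t*C τ^3 + (-1:R3)*X 0^3*X 2^8*C t*C τ^4 + (-2:R3)*X 0^3*X 1*X 2^7*C τ^5 + (2:R3)*X 0^3*X 1*X 2^7*C τ^6 + (-2:R3)*X 0^3*X 1*X 2^7*C τ^7) : R3) +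
      (((-2:R3)*X 0^3*X 1*X 2^7*C t*C τ^4 + (2:R3)*X 0^3*X 1*X 2^7*C t*C τ^5 + (-2:R3)*X 0^3*X 1*X 2^7*C t*C τ^6 + (-1:R3)*X 0^3*X 1^2*X 2^6*C τ^3 + X 0^3*X 1^2*X 2^6*C τ^4 + (-4:R3)*X 0^3*X 1^2*X 2^6*C τ^5 + (3:R3)*X 0^3*X 1^2*X 2^6*C τ^6 + (-4:R3)*X 0^3*X 1^2*X 2^6*C τ^7) : R3) +
      ((X 0^3*X 1^2*X 2^6*C τ^8 + (-1:R3)*X 0^3*X 1^2*X 2^6*C τ^9 + (-1:R3)*X 0^3*X 1^2*X 2^6*C t*C τ^2 + X 0^3*X 1^2*X 2^6*C t*C τ^3 + (-4:R3)*X 0^3*X 1^2*X 2^6*C t*C τ^4 + (3:R3)*X 0^3*X 1^2*X 2^6*C t*C τ^5 + (-4:R3)*X 0^3*X 1^2*X 2^6*C t*C τ^6 + X 0^3*X 1^2*X 2^6*C t*C τ^7) : R3) +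
      (((-1:R3)*X 0^3*X 1^2*X 2^6*C t*C τ^8 + (2:R3)*X 0^3*X 1^3*X 2^5*C τ^2 + (6:R3)*X 0^3*X 1^3*X 2^5*C τ^4 + (-6:R3)*X 0^3*X 1^3*X 2^5*C τ^5 + (2:R3)*X 0^3*X 1^3*X 2^5*C τ^6 + (-4:R3)*X 0^3*X 1^3*X 2^5*C τ^7 + (2:R3)*X 0^3*X 1^3*X 2^5*C τ^8 + (-2:R3)*X 0^3*X 1^3*X 2^5*C τ^9) : R3) +
      (((2:R3)*X 0^3*X 1^3*X 2^5*C t*C τ + (6:R3)*X 0^3*X 1^3*X 2^5*C t*C τ^3 + (-6:R3)*X 0^3*X 1^3*X 2^5*C t*C τ^4 + (2:R3)*X 0^3*X 1^3*X 2^5*C t*C τ^5 + (-4:R3)*X 0^3*X 1^3*X 2^5*C t*C τ^6 + (2:R3)*X 0^3*X 1^3*X 2^5*C t*C τ^7 + (-2:R3)*X 0^3*X 1^3*X 2^5*C t*C τ^8 + (2:R3)*X 0^3*X 1^4*X 2^4*C τ) : R3) +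
      (((9:R3)*X 0^3*X 1^4*X 2^4*C τ^2 + (2:R3)*X 0^3*X 1^4*X 2^4*C τ^3 + (10:R3)*X 0^3*X 1^4*X 2^4*C τ^4 + (-2:R3)*X 0^3*X 1^4*X 2^4*C τ^5 + (3:R3)*X 0^3*X 1^4*X 2^4*C τ^6 + (-4:R3)*X 0^3*X 1^4*X 2^4*C τ^7 + X 0^3*X 1^4*X 2^4*C τ^8 + (-1:R3)*X 0^3*X 1^4*X 2^4*C τ^9) : R3) +
      (((2:R3)*X 0^3*X 1^4*X 2^4*C t + (8:R3)*X 0^3*X 1^4*X 2^4*C t*C τ + (-1:R3)*X 0^3*X 1^4*X 2^4*C t*C τ^2 + (9:R3)*X 0^3*X 1^4*X 2^4*C t*C τ^3 + (-2:R3)*X 0^3*X 1^4*X 2^4*C t*C τ^4 + (3:R3)*X 0^3*X 1^4*X 2^4*C t*C τ^5 + (-4:R3)*X 0^3*X 1^4*X 2^4*C t*C τ^6 + X 0^3*X 1^4*X 2^4*C t*C τ^7) : R3) +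
      (((-1:R3)*X 0^3*X 1^4*X 2^4*C t*C τ^8 + (6:R3)*X 0^3*X 1^5*X 2^3*C τ + (12:R3)*X 0^3*X 1^5*X 2^3*C τ^2 + (4:R3)*X 0^3*X 1^5*X 2^3*C τ^3 + (12:R3)*X 0^3*X 1^5*X 2^3*C τ^4 + (4:R3)*X 0^3*X 1^5*X 2^3*C τ^5 + (2:R3)*X 0^3*X 1^5*X 2^3*C τ^6 + (-2:R3)*X 0^3*X 1^5*X 2^3*C τ^7) : R3) +
      (((2:R3)*X 0^3*X 1^5*X 2^3*C t + (8:R3)*X 0^3*X 1^5*X 2^3*C t*C τ + (8:R3)*X 0^3*X 1^5*X 2^3*C t*C τ^3 + (2:R3)*X 0^3*X 1^5*X 2^3*C t*C τ^5 + (-2:R3)*X 0^3*X 1^5*X 2^3*C t*C τ^6 + X 0^3*X 1^6*X 2^2 + (7:R3)*X 0^3*X 1^6*X 2^2*C τ + (4:R3)*X 0^3*X 1^6*X 2^2*C τ^2) : R3) +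
      (((9:R3)*X 0^3*X 1^6*X 2^2*C τ^3 + X 0^3*X 1^6*X 2^2*C τ^4 + (10:R3)*X 0^3*X 1^6*X 2^2*C τ^5 + X 0^3*X 1^6*X 2^2*C τ^6 + (2:R3)*X 0^3*X 1^6*X 2^2*C t*C τ + (2:R3)*X 0^3*X 1^6*X 2^2*C t*C τ^2 + X 0^3*X 1^6*X 2^2*C t*C τ^3 + X 0^3*X 1^6*X 2^2*C t*C τ^4) : R3) +
      (((4:R3)*X 0^3*X 1^7*X 2*C τ + (4:R3)*X 0^3*X 1^7*X 2*C τ^2 + (4:R3)*X 0^3*X 1^7*X 2*C τ^3 + (4:R3)*X 0^3*X 1^7*X 2*C τ^4 + (4:R3)*X 0^3*X 1^7*X 2*C τ^5 + X 0^3*X 1^8*C τ^2 + (3:R3)*X 0^3*X 1^8*C τ^3 + X 0^3*X 1^8*C τ^4) : R3) +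
      (((-2:R3)*X 0^4*X 2^7*C τ^5 + (-2:R3)*X 0^4*X 2^7*C t*C τ^4 + (-1:R3)*X 0^4*X 1*X 2^6 + X 0^4*X 1*X 2^6*C τ + (-7:R3)*X 0^4*X 1*X 2^6*C τ^3 + (3:R3)*X 0^4*X 1*X 2^6*C τ^4 + (-4:R3)*X 0^4*X 1*X 2^6*C τ^5 + (-2:R3)*X 0^4*X 1*X 2^6*C τ^6) : R3) +
      (((-2:R3)*X 0^4*X 1*X 2^6*C τ^7 + (-8:R3)*X 0^4*X 1*X 2^6*C t*C τ^2 + (4:R3)*X 0^4*X 1*X 2^6*C t*C τ^3 + (-4:R3)*X 0^4*X 1*X 2^6*C t*C τ^4 + (-2:R3)*X 0^4*X 1*X 2^6*C t*C τ^5 + (-2:R3)*X 0^4*X 1*X 2^6*C t*C τ^6 + (-2:R3)*X 0^4*X 1^2*X 2^5*C τ^2 + (-4:R3)*X 0^4*X 1^2*X 2^5*C τ^3) : R3) +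
      (((-10:R3)*X 0^4*X 1^2*X 2^5*C τ^5 + (-4:R3)*X 0^4*X 1^2*X 2^5*C τ^7 + (-2:R3)*X 0^4*X 1^2*X 2^5*C τ^8 + (-2:R3)*X 0^4*X 1^2*X 2^5*C t*C τ + (-4:R3)*X 0^4*X 1^2*X 2^5*C t*C τ^2 + (2:R3)*X 0^4*X 1^2*X 2^5*C t*C τ^3 + (-12:R3)*X 0^4*X 1^2*X 2^5*C t*C τ^4 + (2:R3)*X 0^4*X 1^2*X 2^5*C t*C τ^5) : R3) +
      (((-4:R3)*X 0^4*X 1^2*X 2^5*C t*C τ^6 + (-2:R3)*X 0^4*X 1^2*X 2^5*C t*C τ^7 + X 0^4*X 1^3*X 2^4*C τ + (-2:R3)*X 0^4*X 1^3*X 2^4*C τ^3 + (-2:R3)*X 0^4*X 1^3*X 2^4*C τ^4 + (-9:R3)*X 0^4*X 1^3*X 2^4*C τ^5 + (-2:R3)*X 0^4*X 1^3*X 2^4*C τ^6 + (-3:R3)*X 0^4*X 1^3*X 2^4*C τ^7) : R3) +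
      (((-3:R3)*X 0^4*X 1^3*X 2^4*C τ^8 + X 0^4*X 1^3*X 2^4*C t + X 0^4*X 1^3*X 2^4*C t*C τ + (-3:R3)*X 0^4*X 1^3*X 2^4*C t*C τ^2 + (2:R3)*X 0^4*X 1^3*X 2^4*C t*C τ^3 + (-12:R3)*X 0^4*X 1^3*X 2^4*C t*C τ^4 + (2:R3)*X 0^4*X 1^3*X 2^4*C t*C τ^5 + (-4:R3)*X 0^4*X 1^3*X 2^4*C t*C τ^6) : R3) +
      (((-2:R3)*X 0^4*X 1^3*X 2^4*C t*C τ^7 + (6:R3)*X 0^4*X 1^4*X 2^3*C τ + (4:R3)*X 0^4*X 1^4*X 2^3*C τ^2 + (2:R3)*X 0^4*X 1^4*X 2^3*C τ^3 + (-2:R3)*X 0^4*X 1^4*X 2^3*C τ^4 + (-2:R3)*X 0^4*X 1^4*X 2^3*C τ^5 + (-6:R3)*X 0^4*X 1^4*X 2^3*C τ^6 + (-2:R3)*X 0^4*X 1^4*X 2^3*C τ^8) : R3) +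
      (((4:R3)*X 0^4*X 1^4*X 2^3*C t + (4:R3)*X 0^4*X 1^4*X 2^3*C t*C τ + (-4:R3)*X 0^4*X 1^4*X 2^3*C t*C τ^2 + (4:R3)*X 0^4*X 1^4*X 2^3*C t*C τ^3 + (-4:R3)*X 0^4*X 1^4*X 2^3*C t*C τ^4 + (-2:R3)*X 0^4*X 1^4*X 2^3*C t*C τ^5 + (-2:R3)*X 0^4*X 1^4*X 2^3*C t*C τ^6 + (2:R3)*X 0^4*X 1^5*X 2^2) : R3) +
      (((9:R3)*X 0^4*X 1^5*X 2^2*C τ + (2:R3)*X 0^4*X 1^5*X 2^2*C τ^2 + (10:R3)*X 0^4*X 1^5*X 2^2*C τ^3 + (-2:R3)*X 0^4*X 1^5*X 2^2*C τ^4 + X 0^4*X 1^5*X 2^2*C τ^5 + (-4:R3)*X 0^4*X 1^5*X 2^2*C τ^6 + X 0^4*X 1^5*X 2^2*C τ^7 + (-1:R3)*X 0^4*X 1^5*X 2^2*C τ^8) : R3) +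
      ((X 0^4*X 1^5*X 2^2*C t + (3:R3)*X 0^4*X 1^5*X 2^2*C t*C τ + X 0^4*X 1^5*X 2^2*C t*C τ^2 + (-2:R3)*X 0^4*X 1^5*X 2^2*C t*C τ^4 + (2:R3)*X 0^4*X 1^6*X 2 + (8:R3)*X 0^4*X 1^6*X 2*C τ + (8:R3)*X 0^4*X 1^6*X 2*C τ^3 + (2:R3)*X 0^4*X 1^6*X 2*C τ^5) : R3) +
      (((-2:R3)*X 0^4*X 1^6*X 2*C τ^6 + (2:R3)*X 0^4*X 1^7*C τ + (2:R3)*X 0^4*X 1^7*C τ^2 + (4:R3)*X 0^4*X 1^7*C τ^3 + (-2:R3)*X 0^4*X 1^7*C τ^4 + X 0^4*X 1^7*C τ^6 + (-1:R3)*X 0^4*X 1^7*C τ^7 + (-1:R3)*X 0^4*X 1^7*C t*C τ^5) : R3) +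
      ((X 0^4*X 1^7*C t*C τ^6 + (-1:R3)*X 0^5*X 2^6*C τ^3 + (-3:R3)*X 0^5*X 2^6*C τ^4 + (-1:R3)*X 0^5*X 2^6*C τ^5 + (-1:R3)*X 0^5*X 2^6*C t*C τ^2 + (-3:R3)*X 0^5*X 2^6*C t*C τ^3 + (-1:R3)*X 0^5*X 2^6*C t*C τ^4 + (-4:R3)*X 0^5*X 1*X 2^5*C τ^2) : R3) +
      (((-4:R3)*X 0^5*X 1*X 2^5*C τ^3 + (-6:R3)*X 0^5*X 1*X 2^5*C τ^4 + (-4:R3)*X 0^5*X 1*X 2^5*C τ^5 + (-4:R3)*X 0^5*X 1*X 2^5*C τ^6 + (-4:R3)*X 0^5*X 1*X 2^5*C t*C τ + (-4:R3)*X 0^5*X 1*X 2^5*C t*C τ^2 + (-4:R3)*X 0^5*X 1*X 2^5*C t*C τ^3 + (-4:R3)*X 0^5*X 1*X 2^5*C t*C τ^4) : R3) +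
      (((-4:R3)*X 0^5*X 1*X 2^5*C t*C τ^5 + (-1:R3)*X 0^5*X 1^2*X 2^4*C τ + (-12:R3)*X 0^5*X 1^2*X 2^4*C τ^2 + (-1:R3)*X 0^5*X 1^2*X 2^4*C τ^3 + (-11:R3)*X 0^5*X 1^2*X 2^4*C τ^4 + (-4:R3)*X 0^5*X 1^2*X 2^4*C τ^5 + (-9:R3)*X 0^5*X 1^2*X 2^4*C τ^6 + (-1:R3)*X 0^5*X 1^2*X 2^4*C τ^7) : R3) +
      (((-1:R3)*X 0^5*X 1^2*X 2^4*C t + (-6:R3)*X 0^5*X 1^2*X 2^4*C t*C τ + (-3:R3)*X 0^5*X 1^2*X 2^4*C t*C τ^2 + (-7:R3)*X 0^5*X 1^2*X 2^4*C t*C τ^3 + (-2:R3)*X 0^5*X 1^2*X 2^4*C t*C τ^4 + (-7:R3)*X 0^5*X 1^2*X 2^4*C t*C τ^5 + (-1:R3)*X 0^5*X 1^2*X 2^4*C t*C τ^6 + (-8:R3)*X 0^5*X 1^3*X 2^3*C τ^2) : R3) +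
      (((-2:R3)*X 0^5*X 1^3*X 2^3*C τ^3 + (-16:R3)*X 0^5*X 1^3*X 2^3*C τ^4 + (-2:R3)*X 0^5*X 1^3*X 2^3*C τ^5 + (-8:R3)*X 0^5*X 1^3*X 2^3*C τ^6 + (-2:R3)*X 0^5*X 1^3*X 2^3*C τ^7 + (2:R3)*X 0^5*X 1^3*X 2^3*C t + (-4:R3)*X 0^5*X 1^3*X 2^3*C t*C τ + (-4:R3)*X 0^5*X 1^3*X 2^3*C t*C τ^2) : R3) +
      (((-4:R3)*X 0^5*X 1^3*X 2^3*C t*C τ^3 + (-4:R3)*X 0^5*X 1^3*X 2^3*C t*C τ^4 + (-4:R3)*X 0^5*X 1^3*X 2^3*C t*C τ^5 + X 0^5*X 1^4*X 2^2 + (3:R3)*X 0^5*X 1^4*X 2^2*C τ + (-3:R3)*X 0^5*X 1^4*X 2^2*C τ^2 + X 0^5*X 1^4*X 2^2*C τ^3 + (-15:R3)*X 0^5*X 1^4*X 2^2*C τ^4) : R3) +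
      ((X 0^5*X 1^4*X 2^2*C τ^5 + (-4:R3)*X 0^5*X 1^4*X 2^2*C τ^6 + (-2:R3)*X 0^5*X 1^4*X 2^2*C τ^7 + (2:R3)*X 0^5*X 1^4*X 2^2*C t + (-1:R3)*X 0^5*X 1^4*X 2^2*C t*C τ^2 + (-3:R3)*X 0^5*X 1^4*X 2^2*C t*C τ^3 + (-1:R3)*X 0^5*X 1^4*X 2^2*C t*C τ^4 + (4:R3)*X 0^5*X 1^5*X 2) : R3) +
      (((4:R3)*X 0^5*X 1^5*X 2*C τ + (-4:R3)*X 0^5*X 1^5*X 2*C τ^2 + (4:R3)*X 0^5*X 1^5*X 2*C τ^3 + (-4:R3)*X 0^5*X 1^5*X 2*C τ^4 + (-2:R3)*X 0^5*X 1^5*X 2*C τ^5 + (-2:R3)*X 0^5*X 1^5*X 2*C τ^6 + X 0^5*X 1^6 + (3:R3)*X 0^5*X 1^6*C τ) : R3) +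
      ((X 0^5*X 1^6*C τ^2 + (-2:R3)*X 0^5*X 1^6*C τ^4 + (2:R3)*X 0^6*X 2^5*C τ + (-4:R3)*X 0^6*X 2^5*C τ^2 + (-2:R3)*X 0^6*X 2^5*C τ^3 + (-2:R3)*X 0^6*X 2^5*C τ^4 + (-2:R3)*X 0^6*X 2^5*C t*C τ + (-2:R3)*X 0^6*X 2^5*C t*C τ^2) : R3) +
      (((-2:R3)*X 0^6*X 2^5*C t*C τ^3 + (-2:R3)*X 0^6*X 1*X 2^4*C τ + (-9:R3)*X 0^6*X 1*X 2^4*C τ^2 + (-3:R3)*X 0^6*X 1*X 2^4*C τ^3 + (-9:R3)*X 0^6*X 1*X 2^4*C τ^4 + (-2:R3)*X 0^6*X 1*X 2^4*C τ^5 + (-2:R3)*X 0^6*X 1*X 2^4*C t + (-8:R3)*X 0^6*X 1*X 2^4*C t*C τ) : R3) +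
      (((-8:R3)*X 0^6*X 1*X 2^4*C t*C τ^3 + (-2:R3)*X 0^6*X 1*X 2^4*C t*C τ^4 + (-6:R3)*X 0^6*X 1^2*X 2^3*C τ + (-12:R3)*X 0^6*X 1^2*X 2^3*C τ^2 + (-4:R3)*X 0^6*X 1^2*X 2^3*C τ^3 + (-12:R3)*X 0^6*X 1^2*X 2^3*C τ^4 + (-6:R3)*X 0^6*X 1^2*X 2^3*C τ^5 + (-2:R3)*X 0^6*X 1^2*X 2^3*C t) : R3) +
      (((-8:R3)*X 0^6*X 1^2*X 2^3*C t*C τ + (-8:R3)*X 0^6*X 1^2*X 2^3*C t*C τ^3 + (-2:R3)*X 0^6*X 1^2*X 2^3*C t*C τ^4 + (-1:R3)*X 0^6*X 1^3*X 2^2 + (-6:R3)*X 0^6*X 1^3*X 2^2*C τ + (-5:R3)*X 0^6*X 1^3*X 2^2*C τ^2 + (-9:R3)*X 0^6*X 1^3*X 2^2*C τ^3 + (-11:R3)*X 0^6*X 1^3*X 2^2*C τ^5) : R3) +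
      (((-1:R3)*X 0^6*X 1^3*X 2^2*C τ^6 + X 0^6*X 1^3*X 2^2*C t + (-3:R3)*X 0^6*X 1^3*X 2^2*C t*C τ + (-2:R3)*X 0^6*X 1^3*X 2^2*C t*C τ^2 + (-2:R3)*X 0^6*X 1^3*X 2^2*C t*C τ^4 + (2:R3)*X 0^6*X 1^4*X 2 + (-4:R3)*X 0^6*X 1^4*X 2*C τ + (-4:R3)*X 0^6*X 1^4*X 2*C τ^2) : R3) +
      (((-4:R3)*X 0^6*X 1^4*X 2*C τ^3 + (-4:R3)*X 0^6*X 1^4*X 2*C τ^4 + (-4:R3)*X 0^6*X 1^4*X 2*C τ^5 + (2:R3)*X 0^6*X 1^5 + (-1:R3)*X 0^6*X 1^5*C τ^2 + (-3:R3)*X 0^6*X 1^5*C τ^3 + (-1:R3)*X 0^6*X 1^5*C τ^4 + (-1:R3)*X 0^7*X 2^4*C τ) : R3) +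
      (((-3:R3)*X 0^7*X 2^4*C τ^2 + (-1:R3)*X 0^7*X 2^4*C τ^3 + (-1:R3)*X 0^7*X 2^4*C t + (-3:R3)*X 0^7*X 2^4*C t*C τ + (-1:R3)*X 0^7*X 2^4*C t*C τ^2 + (-6:R3)*X 0^7*X 1*X 2^3*C τ + (-6:R3)*X 0^7*X 1*X 2^3*C τ^2 + (-6:R3)*X 0^7*X 1*X 2^3*C τ^3) : R3) +
      (((-4:R3)*X 0^7*X 1*X 2^3*C t + (-4:R3)*X 0^7*X 1*X 2^3*C t*C τ + (-4:R3)*X 0^7*X 1*X 2^3*C t*C τ^3 + (-2:R3)*X 0^7*X 1^2*X 2^2 + (-9:R3)*X 0^7*X 1^2*X 2^2*C τ + (-3:R3)*X 0^7*X 1^2*X 2^2*C τ^2 + (-9:R3)*X 0^7*X 1^2*X 2^2*C τ^3 + (-2:R3)*X 0^7*X 1^2*X 2^2*C τ^4) : R3) +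
      (((-1:R3)*X 0^7*X 1^2*X 2^2*C t + (-3:R3)*X 0^7*X 1^2*X 2^2*C t*C τ + (-1:R3)*X 0^7*X 1^2*X 2^2*C t*C τ^2 + (-2:R3)*X 0^7*X 1^3*X 2 + (-8:R3)*X 0^7*X 1^3*X 2*C τ + (-8:R3)*X 0^7*X 1^3*X 2*C τ^3 + (-2:R3)*X 0^7*X 1^3*X 2*C τ^4 + X 0^7*X 1^4) : R3) +
      (((-3:R3)*X 0^7*X 1^4*C τ + (-2:R3)*X 0^7*X 1^4*C τ^2 + (-3:R3)*X 0^7*X 1^4*C τ^3 + X 0^7*X 1^4*C τ^4 + (-1:R3)*X 0^7*X 1^4*C τ^6 + X 0^7*X 1^4*C τ^7 + X 0^7*X 1^4*C t*C τ^5 + (-1:R3)*X 0^7*X 1^4*C t*C τ^6) : R3) +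
      (((-2:R3)*X 0^8*X 2^3*C τ + (-2:R3)*X 0^8*X 2^3*C t + (-1:R3)*X 0^8*X 1*X 2^2 + (-5:R3)*X 0^8*X 1*X 2^2*C τ + (-1:R3)*X 0^8*X 1*X 2^2*C τ^2 + (-2:R3)*X 0^8*X 1*X 2^2*C t + (-4:R3)*X 0^8*X 1^2*X 2 + (-4:R3)*X 0^8*X 1^2*X 2*C τ) : R3) +
      (((2:R3)*X 0^8*X 1^2*X 2*C τ^2 + (-6:R3)*X 0^8*X 1^2*X 2*C τ^3 + (-2:R3)*X 0^8*X 1^2*X 2*C t*C τ^4 + (2:R3)*X 0^8*X 1^2*X 2*C t*C τ^5 + (-1:R3)*X 0^8*X 1^3 + (-3:R3)*X 0^8*X 1^3*C τ + (-1:R3)*X 0^8*X 1^3*C τ^2 + (-1:R3)*X 0^9*X 2^2*C τ) : R3) +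
      ((X 0^9*X 2^2*C τ^2 + (-1:R3)*X 0^9*X 2^2*C t + X 0^9*X 2^2*C t*C τ + (-2:R3)*X 0^9*X 1*X 2 + (-2:R3)*X 0^9*X 1^2 + (-1:R3)*X 0^10*X 1 + X 0^10*X 1*C τ + (-1:R3)*X 0^10*X 1*C τ^3) : R3) +
      ((X 0^10*X 1*C τ^4) : R3)) * hu

theorem stmt_1 : ∃ c : ℂ, c ≠ 0 ∧ ∀ t : ℂ,
    pullback Qmap (fun i => Om i + C t * Xi i) =
      fun i => C c * ((Xv + C τ * Yv + C τ * Zv) * (Xv + Yv + C τ ^ 2 * Zv) * (Xv + C τ ^ 2 * Yv + Zv)) ^ 2 * (Om i + C (-t - τ) * Xi i) := by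
  refine ⟨1, one_ne_zero, fun t => ?_⟩
  funext i
  fin_cases i
  · exact comp0 t
  · exact comp1 t
  · exact comp2 t
end
end

section
/- Let F := y³−x³ and G := y³−z³ in ℂ[x,y,z]. Then Ξ ∧ (G·dF − F·dG) = 0, i.e. all three coefficient polynomials of this wedge vanish identically. In other words, F/G is a rational first integral of the Lins Neto foliation ℱ_∞ (defined by Ξ = 0), which is the pencil of cubics c₁·(y³−x³) + c₂·(y³−z³) = 0. -/
open MvPolynomial

noncomputable section

/-- The coefficients of `ω ∧ η` all vanish. -/
def WedgeZero (ω η : Fin 3 → R3) : Prop :=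
  ∀ i j : Fin 3, ω i * η j - ω j * η i = 0

/-- The 1-form `G·dF − F·dG`. -/
def pencilForm (F G : R3) : Fin 3 → R3 :=
  fun i => G * pderiv i F - F * pderiv i G

def Fpol : R3 := Yv ^ 3 - Xv ^ 3

def Gpol : R3 := Yv ^ 3 - Zv ^ 3

theorem stmt_12 : WedgeZero (Xi) (pencilForm Fpol Gpol) := by
  intro i j
  fin_cases i <;> fin_cases j <;>
    simp [Xi, pencilForm, Fpol, Gpol, Xv, Yv, Zv, pderiv_X] <;> ring
end
end
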